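/- arXiv:1408.2776 — 11 statements merged into one kernel-verified Lean document; each statement's English description precedes it below -/
import Mathlib

section
/- Let (A, σ) be a difference ring whose ring of constants const(A,σ) is a field, let β ∈ A, and let σ' be the ring automorphism of the polynomial ring A[t] with σ'(a) = σ(a) for all a ∈ A and σ'(t) = t + β. Then const(A[t], σ') = const(A, σ) (i.e., every σ'-invariant polynomial is a constant polynomial whose coefficient lies in const(A,σ)) if and only if there exists no g ∈ A with σ(g) = g + β. -/
/-!
Writing `σ' p = taylor β (p.map σ)`, compare the two top coefficients of a σ'-invariant
polynomial `p = a tⁿ + b tⁿ⁻¹ + ⋯` with `n ≥ 1`: they give `σ a = a` and `σ b + n β a = b`.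
As constants form a field and `A` has characteristic zero, `n a` is an invariant unit, and
`g = -b / (n a)` solves `σ g = g + β`. Conversely, such a `g` makes `t - g` a nonconstant
invariant polynomial.
-/

open Polynomial

namespace Polynomial

theorem coeff_taylor_natDegree_sub_one {R : Type*} [CommSemiring R] (f : R[X]) (r : R) :
    (taylor r f).coeff (f.natDegree - 1) =
      f.coeff (f.natDegree - 1) + f.natDegree * r * f.leadingCoeff := by
  rcases Nat.eq_zero_or_pos f.natDegree with h0 | hpos
  · rw [h0, Nat.cast_zero, zero_mul, zero_mul, add_zero, Nat.zero_sub, taylor_coeff_zero,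
      eq_C_of_natDegree_eq_zero h0, eval_C, coeff_C_zero]
  · have hdeg : (hasseDeriv (f.natDegree - 1) f).natDegree < 2 :=
      (natDegree_hasseDeriv_le f _).trans_lt (by omega)
    have hsucc : 1 + (f.natDegree - 1) = f.natDegree := by omega
    rw [taylor_coeff, eval_eq_sum_range' hdeg, Finset.sum_range_succ, Finset.sum_range_one,
      hasseDeriv_coeff, hasseDeriv_coeff, zero_add, Nat.choose_self, hsucc,
      ← Nat.choose_symm_of_eq_add hsucc.symm, Nat.choose_one_right, leadingCoeff]
    push_cast
    ring

theorem ringEquiv_apply_eq_taylor_map {A : Type*} [CommRing A] {σ : A ≃+* A} {β : A}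
    {σ' : A[X] ≃+* A[X]} (hC : ∀ a : A, σ' (C a) = C (σ a)) (hX : σ' X = X + C β)
    (p : A[X]) : σ' p = taylor β (p.map (σ : A →+* A)) := by
  have : (σ' : A[X] →+* A[X]) = (taylorAlgHom β : A[X] →+* A[X]).comp (mapRingHom σ) :=
    ringHom_ext (by simp [hC]) (by simp [hX])
  exact DFunLike.congr_fun this p

end Polynomial

theorem Units.apply_inv_eq_of_apply_eq {M F : Type*} [Monoid M] [FunLike F M M]
    [MonoidHomClass F M M] (f : F) {u : Mˣ} (hu : f u = u) : f ↑u⁻¹ = ↑u⁻¹ :=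
  Units.eq_inv_of_mul_eq_one_left (by rw [← hu, ← map_mul, u.mul_inv, map_one])

section DifferenceRing

variable {A : Type*} [CommRing A]

theorem exists_apply_eq_add_of_apply_add_mul_eq {F : Type*} [FunLike F A A] [RingHomClass F A A]
    (σ : F) {u : Aˣ} (hu : σ u = u) {b β : A} (hb : σ b + u * β = b) :
    ∃ g : A, σ g = g + β := by
  refine ⟨-b * ↑u⁻¹, ?_⟩
  rw [map_mul, map_neg, Units.apply_inv_eq_of_apply_eq σ hu]
  linear_combination (-↑u⁻¹ : A) * hb + β * u.mul_inv

theorem exists_apply_eq_add_of_taylor_map_eq_self [CharZero A] (σ : A ≃+* A)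
    (hfield : ∀ c : A, σ c = c → c ≠ 0 → IsUnit c) {β : A} {p : A[X]}
    (hp : taylor β (p.map (σ : A →+* A)) = p) (hdeg : p.natDegree ≠ 0) :
    ∃ g : A, σ g = g + β := by
  set n := p.natDegree
  have hn : (p.map (σ : A →+* A)).natDegree = n := natDegree_map_eq_of_injective σ.injective p
  have hlead : σ p.leadingCoeff = p.leadingCoeff := by
    have := congrArg (coeff · n) hp
    rwa [← hn, coeff_taylor_natDegree, hn, leadingCoeff_map_of_injective σ.injective] at this
  have hnext : σ (p.coeff (n - 1)) + n * β * p.leadingCoeff = p.coeff (n - 1) := by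
    have := congrArg (coeff · (n - 1)) hp
    rwa [← hn, coeff_taylor_natDegree_sub_one, hn, coeff_map,
      leadingCoeff_map_of_injective σ.injective, RingEquiv.coe_toRingHom, hlead] at this
  have hp0 : p ≠ 0 := by
    rintro rfl
    exact hdeg natDegree_zero
  have hunit : IsUnit ((n : A) * p.leadingCoeff) := by
    have ha := hfield _ hlead (leadingCoeff_ne_zero.mpr hp0)
    refine hfield _ (by rw [map_mul, map_natCast, hlead]) ?_
    rwa [Ne, ha.mul_left_eq_zero, Nat.cast_eq_zero]
  obtain ⟨u, hu⟩ := hunit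
  refine exists_apply_eq_add_of_apply_add_mul_eq σ (u := u) (b := p.coeff (n - 1)) ?_ ?_
  · rw [hu, map_mul, map_natCast, hlead]
  · rw [hu]
    linear_combination hnext

end DifferenceRing

/-- Let `(A, σ)` be a difference ring whose ring of constants is a
field, `β ∈ A`, and `σ'` the ring automorphism of `A[t]` extending `σ` with
`σ'(t) = t + β`.  Then `const(A[t], σ') = const(A, σ)` iff there is no `g ∈ A` with
`σ(g) = g + β`. -/
theorem stmt_0 {A : Type*} [CommRing A] [CharZero A]
    (σ : A ≃+* A)
    (hfield : ∀ c : A, σ c = c → c ≠ 0 → IsUnit c)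
    (β : A)
    (σ' : Polynomial A ≃+* Polynomial A)
    (hC : ∀ a : A, σ' (Polynomial.C a) = Polynomial.C (σ a))
    (hX : σ' Polynomial.X = Polynomial.X + Polynomial.C β) :
    (∀ p : Polynomial A, σ' p = p → ∃ c : A, σ c = c ∧ p = Polynomial.C c)
      ↔ ¬ ∃ g : A, σ g = g + β := by
  constructor
  · rintro hconst ⟨g, hg⟩
    obtain ⟨c, -, hc⟩ := hconst (X - C g) (by rw [map_sub, hX, hC, hg, map_add]; ring)
    simpa using congrArg (coeff · 1) hc
  · intro hno p hp
    by_cases hdeg : p.natDegree = 0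
    · rw [eq_C_of_natDegree_eq_zero hdeg, hC] at hp
      exact ⟨p.coeff 0, C_injective hp, eq_C_of_natDegree_eq_zero hdeg⟩
    · rw [ringEquiv_apply_eq_taylor_map hC hX] at hp
      exact absurd (exists_apply_eq_add_of_taylor_map_eq_self σ hfield hp hdeg) hno
end

section
/- Let (A, σ) be a difference ring, let α be a unit of A, and let σ' be the ring automorphism of the Laurent polynomial ring A[t, t⁻¹] with σ'(a) = σ(a) for all a ∈ A and σ'(t) = α·t. Then const(A[t,t⁻¹], σ') = const(A, σ) (every σ'-invariant Laurent polynomial is a constant Laurent polynomial with σ-invariant coefficient) if and only if there exist no g ∈ A∖{0} and m ∈ ℤ∖{0} with σ(g) = α^m·g. Moreover, if const(A[t,t⁻¹], σ') = const(A, σ), then α^n ≠ 1 for every integer n > 0. -/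
/-!
The automorphism `σ'` acts on coefficients by `(σ' p)ₘ = σ(pₘ) αᵐ`, so `p` is `σ'`-invariant
exactly when `σ(pₘ) = α⁻ᵐ pₘ` for every `m`. A nonzero solution `g` of `σ g = αᵐ g` with
`m ≠ 0` therefore gives the non-constant invariant monomial `g t⁻ᵐ`, and conversely, if there is
no such solution, an invariant `p` has no coefficients off degree `0`. Taking `g = 1` shows that
`αⁿ = 1` with `n > 0` would produce the invariant `t⁻ⁿ`.
-/

open LaurentPolynomial

namespace LaurentPolynomial

variable {A : Type*} [CommRing A] {σ : A →+* A} {α : Aˣ} {f : A[T;T⁻¹] →+* A[T;T⁻¹]}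

theorem map_T_of_map_T_one (hT : f (T 1) = C (α : A) * T 1) (n : ℤ) :
    f (T n) = C ((α ^ n : Aˣ) : A) * T n := by
  let φ : Multiplicative ℤ →* A[T;T⁻¹] := f.toMonoidHom.comp (AddMonoidAlgebra.of A ℤ)
  let ψ : Multiplicative ℤ →* A[T;T⁻¹] :=
    C.toMonoidHom.comp ((Units.coeHom A).comp (zpowersHom Aˣ α)) * AddMonoidAlgebra.of A ℤ
  have : φ = ψ := MonoidHom.ext_mint (by simpa [φ, ψ, AddMonoidAlgebra.of_apply] using hT)
  simpa [φ, ψ, AddMonoidAlgebra.of_apply] using DFunLike.congr_fun this (Multiplicative.ofAdd n)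

theorem coeff_C_mul_T (a : A) (n m : ℤ) : (C a * T n).coeff m = if n = m then a else 0 := by
  rw [← single_eq_C_mul_T, AddMonoidAlgebra.coeff_single, Finsupp.single_apply]

theorem eq_zero_of_C_mul_T_eq_C {a c : A} {n : ℤ} (hn : n ≠ 0) (h : C a * T n = C c) : a = 0 := by
  simpa [coeff_C_mul_T, hn] using congr_arg (·.coeff n) h

section

variable (hC : ∀ a, f (C a) = C (σ a)) (hT : f (T 1) = C (α : A) * T 1)
include hC hT

theorem coeff_map_of_map_C_of_map_T (p : A[T;T⁻¹]) (m : ℤ) :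
    (f p).coeff m = σ (p.coeff m) * ((α ^ m : Aˣ) : A) := by
  induction p using LaurentPolynomial.induction_on' with
  | add p q hp hq => simp [hp, hq, add_mul]
  | C_mul_T n a =>
    rw [map_mul, hC, map_T_of_map_T_one hT, ← mul_assoc, ← map_mul, coeff_C_mul_T, coeff_C_mul_T]
    split_ifs with h <;> simp [h]

theorem map_eq_self_iff_of_map_C_of_map_T {p : A[T;T⁻¹]} :
    f p = p ↔ ∀ m, σ (p.coeff m) = ((α ^ (-m) : Aˣ) : A) * p.coeff m := by
  simp only [LaurentPolynomial.ext_iff, coeff_map_of_map_C_of_map_T hC hT, zpow_neg,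
    Units.eq_inv_mul_iff_mul_eq, mul_comm]

theorem map_C_mul_T_neg_eq_self {g : A} {m : ℤ} (hg : σ g = ((α ^ m : Aˣ) : A) * g) :
    f (C g * T (-m)) = C g * T (-m) := by
  refine (map_eq_self_iff_of_map_C_of_map_T hC hT).2 fun k => ?_
  rw [coeff_C_mul_T]
  split_ifs with hk
  · simp [← hk, hg]
  · simp

theorem exists_eq_C_of_map_eq_self
    (hα : ∀ (g : A) (m : ℤ), m ≠ 0 → σ g = ((α ^ m : Aˣ) : A) * g → g = 0)
    {p : A[T;T⁻¹]} (hp : f p = p) : ∃ c, σ c = c ∧ p = C c := by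
  have hinv := (map_eq_self_iff_of_map_C_of_map_T hC hT).1 hp
  refine ⟨p.coeff 0, by simpa using hinv 0, LaurentPolynomial.ext fun m => ?_⟩
  rcases eq_or_ne m 0 with rfl | hm
  · simp
  · simp [hα _ _ (neg_ne_zero.2 hm) (hinv m), hm]

end

end LaurentPolynomial

/-- Let `(A, σ)` be a difference ring, `α` a unit of `A`, and `σ'`
the ring automorphism of the Laurent polynomial ring `A[t,t⁻¹]` extending `σ` with
`σ'(t) = α·t`.  Then `const(A[t,t⁻¹], σ') = const(A, σ)` iff there are no
`g ∈ A∖{0}` and `m ∈ ℤ∖{0}` with `σ(g) = α^m·g`; moreover in that case `α^n ≠ 1`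
for every integer `n > 0`. -/
theorem stmt_1 {A : Type*} [CommRing A] [CharZero A]
    (σ : A ≃+* A) (α : Aˣ)
    (σ' : LaurentPolynomial A ≃+* LaurentPolynomial A)
    (hC : ∀ a : A, σ' (LaurentPolynomial.C a) = LaurentPolynomial.C (σ a))
    (hT : σ' (LaurentPolynomial.T 1) = LaurentPolynomial.C (α : A) * LaurentPolynomial.T 1) :
    ((∀ p : LaurentPolynomial A, σ' p = p → ∃ c : A, σ c = c ∧ p = LaurentPolynomial.C c)
      ↔ ¬ ∃ (g : A) (m : ℤ), g ≠ 0 ∧ m ≠ 0 ∧ σ g = ((α ^ m : Aˣ) : A) * g)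
    ∧ ((∀ p : LaurentPolynomial A, σ' p = p → ∃ c : A, σ c = c ∧ p = LaurentPolynomial.C c)
      → ∀ n : ℕ, 0 < n → (α : A) ^ n ≠ 1) := by
  have const_iff : (∀ p : A[T;T⁻¹], σ' p = p → ∃ c : A, σ c = c ∧ p = C c) ↔
      ¬ ∃ (g : A) (m : ℤ), g ≠ 0 ∧ m ≠ 0 ∧ σ g = ((α ^ m : Aˣ) : A) * g := by
    constructor
    · rintro hconst ⟨g, m, hg, hm, hσg⟩
      obtain ⟨c, -, hc⟩ := hconst _
        (map_C_mul_T_neg_eq_self (σ := σ.toRingHom) (f := σ'.toRingHom) hC hT hσg)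
      exact hg (eq_zero_of_C_mul_T_eq_C (neg_ne_zero.2 hm) hc)
    · intro hno p hp
      refine exists_eq_C_of_map_eq_self (σ := σ.toRingHom) (f := σ'.toRingHom) hC hT
        (fun g m hm hσg => ?_) hp
      by_contra hg
      exact hno ⟨g, m, hg, hm, hσg⟩
  refine ⟨const_iff, fun hconst n hn hα => const_iff.1 hconst ⟨1, n, one_ne_zero, by omega, ?_⟩⟩
  simp [hα]
end

section
/- Let (A, σ) be a difference ring, let λ be a natural number with λ > 1, and let α be a unit of A with α^λ = 1. Let E = A[y]/⟨y^λ − 1⟩ with quotient map π, write x = π(y), and let σ'' be the ring automorphism of E induced by the automorphism of A[y] acting as σ on A and sending y ↦ α·y (so σ''(x) = α·x and x^λ = 1 in E). Then const(E, σ'') equals the image of const(A, σ) under π (every σ''-invariant element of E comes from a σ-invariant element of A) if and only if there exist no g ∈ A∖{0} and m ∈ {1, …, λ−1} with σ(g) = α^m·g. Moreover, if this holds, then λ is the least positive integer n with α^n = 1. -/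
/-!
Every element of `A[X] ⧸ (X ^ λ - 1)` has a unique representative `r` of degree `< λ`, and
`σ''` maps it to the class of `Σ σ(r_j) α^j X^j` (`Polynomial.twist`), again of degree `< λ`.
Hence `r` is fixed iff `σ(r_j) α^j = r_j` for every `j`, i.e. iff `σ(r_j) = α^(λ-j) r_j`.
A fixed class is not a constant exactly when some `r_j` with `0 < j < λ` is nonzero, and such
an `r_j` is a `g` with `σ g = α^m g`, `m = λ - j`; conversely such a `g` makes `g X^(λ-m)` fixed.
Taking `g = 1` shows that `α^n ≠ 1` for `0 < n < λ`.
-/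

open Polynomial

theorem mul_pow_eq_iff_eq_pow_mul {M : Type*} [CommMonoid M] {a b c : M} {i j : ℕ}
    (h : a ^ (i + j) = 1) : b * a ^ i = c ↔ b = a ^ j * c := by
  rw [pow_add] at h
  constructor
  · rintro rfl
    rw [mul_left_comm, mul_comm (a ^ j), h, mul_one]
  · rintro rfl
    rw [mul_right_comm, mul_comm (a ^ j), h, one_mul]

namespace Polynomial

variable {A : Type*} [CommRing A]

theorem mk_span_modByMonic (f p : A[X]) :
    Ideal.Quotient.mk (Ideal.span {f}) (p %ₘ f) = Ideal.Quotient.mk (Ideal.span {f}) p := by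
  rw [Ideal.Quotient.eq, Ideal.mem_span_singleton, modByMonic_eq_sub_mul_div, sub_sub_cancel_left]
  exact (dvd_mul_right f _).neg_right

theorem eq_of_mk_span_eq_of_degree_lt {f p q : A[X]} (hf : f.Monic) (hp : p.degree < f.degree)
    (hq : q.degree < f.degree)
    (h : Ideal.Quotient.mk (Ideal.span {f}) p = Ideal.Quotient.mk (Ideal.span {f}) q) : p = q := by
  rw [Ideal.Quotient.eq, Ideal.mem_span_singleton] at h
  by_contra hne
  exact hf.not_dvd_of_degree_lt (sub_ne_zero.mpr hne)
    ((degree_sub_le p q).trans_lt (max_lt hp hq)) h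

noncomputable def twist (σ : A →+* A) (a : A) (p : A[X]) : A[X] :=
  (p.map σ).comp (C a * X)

variable (σ : A →+* A) (a : A)

@[simp]
theorem coeff_twist (p : A[X]) (n : ℕ) : (twist σ a p).coeff n = σ (p.coeff n) * a ^ n := by
  simp [twist]

theorem degree_twist_le (p : A[X]) : (twist σ a p).degree ≤ p.degree := by
  rw [degree_le_iff_coeff_zero]
  intro m hm
  rw [coeff_twist, coeff_eq_zero_of_degree_lt hm, map_zero, zero_mul]

theorem twist_eq_self_iff (p : A[X]) :
    twist σ a p = p ↔ ∀ n, σ (p.coeff n) * a ^ n = p.coeff n := by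
  simp [Polynomial.ext_iff]

theorem apply_mk_eq_mk_twist {I : Ideal A[X]} (φ : A[X] ⧸ I →+* A[X] ⧸ I)
    (hC : ∀ c, φ (Ideal.Quotient.mk I (C c)) = Ideal.Quotient.mk I (C (σ c)))
    (hX : φ (Ideal.Quotient.mk I X) = Ideal.Quotient.mk I (C a) * Ideal.Quotient.mk I X)
    (p : A[X]) : φ (Ideal.Quotient.mk I p) = Ideal.Quotient.mk I (twist σ a p) := by
  induction p using Polynomial.induction_on' with
  | add p q hp hq => simp [twist, hp, hq]
  | monomial n c => simp [twist, ← C_mul_X_pow_eq_monomial, hC, hX, mul_pow]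

theorem mk_twist_eq_mk_iff {f r : A[X]} (hf : f.Monic) (hr : r.degree < f.degree) :
    Ideal.Quotient.mk (Ideal.span {f}) (twist σ a r) = Ideal.Quotient.mk (Ideal.span {f}) r ↔
      twist σ a r = r :=
  ⟨eq_of_mk_span_eq_of_degree_lt hf ((degree_twist_le σ a r).trans_lt hr) hr, congrArg _⟩

theorem monic_X_pow_sub_one {n : ℕ} (hn : n ≠ 0) : (X ^ n - 1 : A[X]).Monic := by
  simpa using monic_X_pow_sub_C (1 : A) hn

theorem degree_X_pow_sub_one [Nontrivial A] {n : ℕ} (hn : 0 < n) :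
    (X ^ n - 1 : A[X]).degree = n := by
  simpa using degree_X_pow_sub_C hn (1 : A)

section CyclicQuotient

variable {lam : ℕ}
  {φ : A[X] ⧸ Ideal.span {(X ^ lam - 1 : A[X])} →+* A[X] ⧸ Ideal.span {(X ^ lam - 1 : A[X])}}

theorem mk_C_mul_X_pow_fixed
    (hC : ∀ c, φ (Ideal.Quotient.mk _ (C c)) = Ideal.Quotient.mk _ (C (σ c)))
    (hX : φ (Ideal.Quotient.mk _ X) = Ideal.Quotient.mk _ (C a) * Ideal.Quotient.mk _ X)
    (ha : a ^ lam = 1) {g : A} {m : ℕ} (hm : m ≤ lam)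
    (hg : σ g = a ^ m * g) :
    φ (Ideal.Quotient.mk _ (C g * X ^ (lam - m))) = Ideal.Quotient.mk _ (C g * X ^ (lam - m)) := by
  rw [apply_mk_eq_mk_twist σ a φ hC hX, (twist_eq_self_iff σ a _).mpr]
  intro n
  rw [coeff_C_mul_X_pow]
  split_ifs with hn
  · subst hn
    exact (mul_pow_eq_iff_eq_pow_mul (by rwa [Nat.sub_add_cancel hm])).mpr hg
  · rw [map_zero, zero_mul]

theorem not_exists_eigenvector_of_fixed_eq_mk_C [Nontrivial A]
    (hC : ∀ c, φ (Ideal.Quotient.mk _ (C c)) = Ideal.Quotient.mk _ (C (σ c)))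
    (hX : φ (Ideal.Quotient.mk _ X) = Ideal.Quotient.mk _ (C a) * Ideal.Quotient.mk _ X)
    (ha : a ^ lam = 1)
    (hconst : ∀ p, φ p = p → ∃ c, σ c = c ∧ p = Ideal.Quotient.mk _ (C c)) :
    ¬ ∃ (g : A) (m : ℕ), g ≠ 0 ∧ 1 ≤ m ∧ m ≤ lam - 1 ∧ σ g = a ^ m * g := by
  rintro ⟨g, m, hg, hm1, hm, hσg⟩
  have hk : 0 < lam - m ∧ lam - m < lam := by omega
  obtain ⟨c, -, hc⟩ := hconst _ (mk_C_mul_X_pow_fixed σ a hC hX ha (by omega) hσg)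
  have hlam : (X ^ lam - 1 : A[X]).degree = lam := degree_X_pow_sub_one (by omega)
  have hgc : C g * X ^ (lam - m) = C c :=
    eq_of_mk_span_eq_of_degree_lt (monic_X_pow_sub_one (by omega))
      (hlam ▸ (degree_C_mul_X_pow_le _ _).trans_lt (by exact_mod_cast hk.2))
      (hlam ▸ degree_C_le.trans_lt (by exact_mod_cast hk.1.trans hk.2)) hc
  have := congrArg (coeff · (lam - m)) hgc
  simp only [coeff_C_mul, coeff_X_pow, ↓reduceIte, mul_one, coeff_C, hk.1.ne'] at this
  exact hg this

theorem exists_eq_mk_C_of_fixed [Nontrivial A]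
    (hC : ∀ c, φ (Ideal.Quotient.mk _ (C c)) = Ideal.Quotient.mk _ (C (σ c)))
    (hX : φ (Ideal.Quotient.mk _ X) = Ideal.Quotient.mk _ (C a) * Ideal.Quotient.mk _ X)
    (hlam : 0 < lam) (ha : a ^ lam = 1)
    (hno : ¬ ∃ (g : A) (m : ℕ), g ≠ 0 ∧ 1 ≤ m ∧ m ≤ lam - 1 ∧ σ g = a ^ m * g)
    {p : A[X] ⧸ Ideal.span {(X ^ lam - 1 : A[X])}} (hp : φ p = p) :
    ∃ c, σ c = c ∧ p = Ideal.Quotient.mk _ (C c) := by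
  obtain ⟨q, rfl⟩ := Ideal.Quotient.mk_surjective p
  have hf := monic_X_pow_sub_one (A := A) hlam.ne'
  have hdeg : (q %ₘ (X ^ lam - 1)).degree < (X ^ lam - 1 : A[X]).degree :=
    degree_modByMonic_lt q hf
  rw [← mk_span_modByMonic, apply_mk_eq_mk_twist σ a φ hC hX, mk_twist_eq_mk_iff σ a hf hdeg,
    twist_eq_self_iff] at hp
  set r := q %ₘ (X ^ lam - 1)
  have hzero : ∀ n, 0 < n → r.coeff n = 0 := by
    intro n hn
    by_cases hnl : n < lam
    · by_contra hne
      exact hno ⟨r.coeff n, lam - n, hne, by omega, by omega,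
        (mul_pow_eq_iff_eq_pow_mul (by rwa [Nat.add_sub_cancel' hnl.le])).mp (hp n)⟩
    · rw [degree_X_pow_sub_one hlam] at hdeg
      exact coeff_eq_zero_of_degree_lt (hdeg.trans_le (by exact_mod_cast not_lt.mp hnl))
  have hrC : r = C (r.coeff 0) :=
    eq_C_of_degree_le_zero ((degree_le_iff_coeff_zero _ _).mpr fun n hn =>
      hzero n (by exact_mod_cast hn))
  refine ⟨r.coeff 0, by simpa using hp 0, ?_⟩
  rw [← mk_span_modByMonic, ← hrC]

theorem forall_fixed_eq_mk_C_iff [Nontrivial A]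
    (hC : ∀ c, φ (Ideal.Quotient.mk _ (C c)) = Ideal.Quotient.mk _ (C (σ c)))
    (hX : φ (Ideal.Quotient.mk _ X) = Ideal.Quotient.mk _ (C a) * Ideal.Quotient.mk _ X)
    (hlam : 0 < lam) (ha : a ^ lam = 1) :
    (∀ p, φ p = p → ∃ c, σ c = c ∧ p = Ideal.Quotient.mk _ (C c)) ↔
      ¬ ∃ (g : A) (m : ℕ), g ≠ 0 ∧ 1 ≤ m ∧ m ≤ lam - 1 ∧ σ g = a ^ m * g :=
  ⟨not_exists_eigenvector_of_fixed_eq_mk_C σ a hC hX ha,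
    fun hno _ hp => exists_eq_mk_C_of_fixed σ a hC hX hlam ha hno hp⟩

end CyclicQuotient

end Polynomial

/-- Let `(A, σ)` be a difference ring, `λ > 1`, `α` a unit of `A`
with `α^λ = 1`, and let `E = A[y]/⟨y^λ − 1⟩` with induced automorphism `σ''`
(`σ''` acts as `σ` on `A` and sends `x = π(y)` to `α·x`).  Then
`const(E, σ'')` equals the image of `const(A, σ)` iff there are no `g ∈ A∖{0}` and
`m ∈ {1, …, λ−1}` with `σ(g) = α^m·g`; moreover in that case `λ` is the least
positive integer `n` with `α^n = 1`. -/
theorem stmt_2 {A : Type*} [CommRing A] [CharZero A]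
    (σ : A ≃+* A) (lam : ℕ) (hlam : 1 < lam)
    (α : Aˣ) (hα : (α : A) ^ lam = 1)
    (I : Ideal (Polynomial A))
    (hI : I = Ideal.span {(Polynomial.X : Polynomial A) ^ lam - 1})
    (σ'' : (Polynomial A ⧸ I) ≃+* (Polynomial A ⧸ I))
    (hC : ∀ a : A, σ'' (Ideal.Quotient.mk I (Polynomial.C a))
        = Ideal.Quotient.mk I (Polynomial.C (σ a)))
    (hX : σ'' (Ideal.Quotient.mk I Polynomial.X)
        = Ideal.Quotient.mk I (Polynomial.C (α : A)) * Ideal.Quotient.mk I Polynomial.X) :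
    ((∀ p : Polynomial A ⧸ I, σ'' p = p →
        ∃ c : A, σ c = c ∧ p = Ideal.Quotient.mk I (Polynomial.C c))
      ↔ ¬ ∃ (g : A) (m : ℕ), g ≠ 0 ∧ 1 ≤ m ∧ m ≤ lam - 1 ∧ σ g = (α : A) ^ m * g)
    ∧ ((∀ p : Polynomial A ⧸ I, σ'' p = p →
        ∃ c : A, σ c = c ∧ p = Ideal.Quotient.mk I (Polynomial.C c))
      → ∀ n : ℕ, 0 < n → (α : A) ^ n = 1 → lam ≤ n) := by
  subst hI
  have key := forall_fixed_eq_mk_C_iff (σ : A →+* A) (α : A) (φ := σ''.toRingHom) hC hX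
    (by omega) hα
  refine ⟨key, fun hconst n hn hαn => ?_⟩
  by_contra! hlt
  exact key.mp hconst ⟨1, n, one_ne_zero, hn, by omega, by simp [hαn]⟩
end

section
/- Let (A, σ) be a difference ring and let G be a subgroup of the unit group Aˣ such that every nonzero element c ∈ A satisfying σ(c) = u·c for some u ∈ G is a unit of A. Let f₁, …, fₙ ∈ G. Then the set M((f₁,…,fₙ), A) = {(m₁,…,mₙ) ∈ ℤⁿ : there exists g ∈ A∖{0} with σ(g) = f₁^{m₁}···fₙ^{mₙ}·g} is an additive subgroup of ℤⁿ (in particular a ℤ-submodule of ℤⁿ, hence free of rank at most n). -/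
/-!
Every unit `v` gives the solution `g = v` of `σ g = (σ v / v) * g`, and conversely the hypothesis
makes every nonzero solution with `u ∈ G` a unit. Hence `M(f, A)` is the preimage of the subgroup
`{σ v / v : v ∈ Aˣ}` under the additive homomorphism `m ↦ ∏ i, f i ^ m i` from `ℤⁿ` to `Aˣ`.
-/

section

variable {A : Type*} [CommRing A]

def Units.ratioHom (σ : A ≃+* A) : Aˣ →* Aˣ := Units.map (σ : A →* A) / MonoidHom.id Aˣ

theorem Units.mem_range_ratioHom_iff (σ : A ≃+* A) (u : Aˣ) :
    u ∈ (Units.ratioHom σ).range ↔ ∃ v : Aˣ, σ v = u * v := by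
  refine exists_congr fun v => ?_
  rw [Units.ratioHom, MonoidHom.div_apply, div_eq_iff_eq_mul, Units.ext_iff]
  simp

theorem exists_ne_zero_apply_eq_mul_iff [Nontrivial A] (σ : A ≃+* A) (G : Subgroup Aˣ)
    (hG : ∀ c : A, c ≠ 0 → (∃ u ∈ G, σ c = (u : A) * c) → IsUnit c) {u : Aˣ} (hu : u ∈ G) :
    (∃ g : A, g ≠ 0 ∧ σ g = u * g) ↔ u ∈ (Units.ratioHom σ).range := by
  rw [Units.mem_range_ratioHom_iff]
  constructor
  · rintro ⟨g, hg, hσg⟩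
    obtain ⟨v, rfl⟩ := hG g hg ⟨u, hu, hσg⟩
    exact ⟨v, hσg⟩
  · rintro ⟨v, hσv⟩
    exact ⟨v, v.ne_zero, hσv⟩

def prodZPowHom {ι M : Type*} [Fintype ι] [CommGroup M] (f : ι → M) :
    (ι → ℤ) →+ Additive M :=
  AddMonoidHom.mk' (fun m => Additive.ofMul (∏ i, f i ^ m i)) fun a b => by
    simp only [Pi.add_apply, zpow_add, Finset.prod_mul_distrib, ofMul_mul]

end

/-- Let `(A, σ)` be a difference ring and `G ≤ Aˣ` such that every
nonzero semi-constant over `G` is a unit.  For `f₁, …, fₙ ∈ G`, the set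
`M((f₁,…,fₙ), A) = {m ∈ ℤⁿ : ∃ g ≠ 0, σ(g) = f₁^{m₁}⋯fₙ^{mₙ}·g}` is an additive
subgroup of `ℤⁿ`. -/
theorem stmt_3 {A : Type*} [CommRing A] [CharZero A]
    (σ : A ≃+* A) (G : Subgroup Aˣ)
    (hG : ∀ c : A, c ≠ 0 → (∃ u ∈ G, σ c = (u : A) * c) → IsUnit c)
    (n : ℕ) (f : Fin n → Aˣ) (hf : ∀ i, f i ∈ G) :
    ∃ M : AddSubgroup (Fin n → ℤ),
      (M : Set (Fin n → ℤ)) =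
        {m : Fin n → ℤ | ∃ g : A, g ≠ 0 ∧ σ g = ((∏ i, f i ^ m i : Aˣ) : A) * g} := by
  refine ⟨(Units.ratioHom σ).range.toAddSubgroup.comap (prodZPowHom f), Set.ext fun m => ?_⟩
  have hm : ∏ i, f i ^ m i ∈ G := G.prod_mem fun i _ => G.zpow_mem (hf i) (m i)
  exact (exists_ne_zero_apply_eq_mul_iff σ G hG hm).symm
end

section
/- Let (A, σ) be a difference ring whose constants form a field K = const(A,σ), and let G be a subgroup of the unit group Aˣ such that every nonzero element c ∈ A satisfying σ(c) = u·c for some u ∈ G is a unit of A. Let W be a K-submodule of A, let f₁, …, fₙ ∈ A, and let u ∈ G. Then V(u, (f₁,…,fₙ), W) = {(c₁,…,cₙ,g) ∈ Kⁿ × W : σ(g) − u·g = c₁f₁ + ⋯ + cₙfₙ} is a K-submodule of Kⁿ × W of dimension at most n + 1 over K (equivalently, any n + 2 of its elements are K-linearly dependent). -/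
/-!
The constants `K` form a field. Among `n + 2` solutions, the `K`-linear relations between their
coefficient vectors in `Kⁿ` form a space of dimension at least two. A relation `d` combines the
solutions into one with zero coefficients, i.e. into `g_d ∈ W` with `σ g_d = u g_d`. Either
`g_d = 0`, or `g_d` is a nonzero semi-constant, hence a unit; then for a relation `e` independent
of `d` the ratio `g_e / g_d` is a constant `c`, and `e - c d` is a nonzero relation that also
kills the `W`-components.
-/

/-- The solution set `V(u, (f₁,…,fₙ), W)` of the parameterized first-order linear
difference equation `σ(g) − u·g = c₁f₁ + ⋯ + cₙfₙ` with constants `cᵢ` and `g ∈ W`. -/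
def paramSolSet {A : Type*} [CommRing A] (σ : A ≃+* A) (W : Set A) {n : ℕ}
    (f : Fin n → A) (u : A) : Set ((Fin n → A) × A) :=
  {p | (∀ i, σ (p.1 i) = p.1 i) ∧ p.2 ∈ W ∧ σ p.2 - u * p.2 = ∑ i, p.1 i * f i}

theorem LinearMap.exists_linearIndependent_pair_ker {K V V' : Type*} [Field K]
    [AddCommGroup V] [Module K V] [FiniteDimensional K V]
    [AddCommGroup V'] [Module K V'] [FiniteDimensional K V']
    (φ : V →ₗ[K] V') (h : Module.finrank K V' + 2 ≤ Module.finrank K V) :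
    ∃ d e : LinearMap.ker φ, LinearIndependent K ![d, e] := by
  have hker : 1 < Module.finrank K (LinearMap.ker φ) := by
    have := φ.finrank_range_add_finrank_ker
    have := (LinearMap.range φ).finrank_le
    omega
  obtain ⟨d, hd⟩ := Module.finrank_pos_iff_exists_ne_zero.mp (zero_lt_one.trans hker)
  exact ⟨d, exists_linearIndependent_pair_of_one_lt_finrank hker hd⟩

section DifferenceRing

variable {A : Type*} [CommRing A] (σ : A ≃+* A)

def constSubring : Subring A := (σ : A →+* A).eqLocus (RingHom.id A)

variable {σ}

theorem mem_constSubring {c : A} : c ∈ constSubring σ ↔ σ c = c := Iff.rfl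

theorem map_inv_of_map_eq_mul {u w : Aˣ} (h : σ w = u * w) :
    σ ↑w⁻¹ = ↑u⁻¹ * ↑w⁻¹ := by
  have h' : σ ↑w⁻¹ * (u * w) = 1 := by rw [← h, ← map_mul, Units.inv_mul, map_one]
  calc σ ↑w⁻¹ = σ ↑w⁻¹ * (u * w) * (↑u⁻¹ * ↑w⁻¹) := by
        rw [mul_assoc, mul_mul_mul_comm, Units.mul_inv, Units.mul_inv, one_mul, mul_one]
    _ = ↑u⁻¹ * ↑w⁻¹ := by rw [h', one_mul]

theorem map_mul_inv_eq_of_map_eq_mul {u w : Aˣ} {g : A} (hw : σ w = u * w)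
    (hg : σ g = u * g) : σ (g * ↑w⁻¹) = g * ↑w⁻¹ := by
  rw [map_mul, hg, map_inv_of_map_eq_mul hw, mul_mul_mul_comm, Units.mul_inv, one_mul]

theorem isField_constSubring [Nontrivial A]
    (hfield : ∀ c : A, σ c = c → c ≠ 0 → IsUnit c) :
    IsField (constSubring σ) where
  exists_pair_ne := ⟨0, 1, zero_ne_one⟩
  mul_comm := mul_comm
  mul_inv_cancel {a} ha := by
    obtain ⟨w, hw⟩ := hfield a a.2 (by simpa using ha)
    have hw1 : σ w = (1 : Aˣ) * w := by rw [Units.val_one, one_mul, hw]; exact a.2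
    refine ⟨⟨↑w⁻¹, ?_⟩, Subtype.ext ?_⟩
    · exact mem_constSubring.mpr (by simpa using map_inv_of_map_eq_mul hw1)
    · simp [← hw]


variable {W : Set A} {n : ℕ} {f : Fin n → A}

theorem zero_mem_paramSolSet {u : A} (hW0 : (0 : A) ∈ W) : 0 ∈ paramSolSet σ W f u :=
  ⟨fun _ => map_zero σ, hW0, by simp⟩

theorem add_mem_paramSolSet {u : A} (hWadd : ∀ x ∈ W, ∀ y ∈ W, x + y ∈ W)
    {p q : (Fin n → A) × A} (hp : p ∈ paramSolSet σ W f u) (hq : q ∈ paramSolSet σ W f u) :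
    p + q ∈ paramSolSet σ W f u := by
  obtain ⟨hp1, hp2, hp3⟩ := hp
  obtain ⟨hq1, hq2, hq3⟩ := hq
  refine ⟨fun i => by simp [hp1 i, hq1 i], hWadd _ hp2 _ hq2, ?_⟩
  simp only [Prod.fst_add, Prod.snd_add, Pi.add_apply, map_add, add_mul,
    Finset.sum_add_distrib, ← hp3, ← hq3]
  ring

theorem smul_mem_paramSolSet {u : A} (hWsmul : ∀ c : A, σ c = c → ∀ x ∈ W, c * x ∈ W)
    {c : A} (hc : σ c = c) {p : (Fin n → A) × A} (hp : p ∈ paramSolSet σ W f u) :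
    c • p ∈ paramSolSet σ W f u := by
  obtain ⟨hp1, hp2, hp3⟩ := hp
  refine ⟨fun i => by simp [hc, hp1 i], hWsmul c hc _ hp2, ?_⟩
  simp only [Prod.smul_fst, Prod.smul_snd, Pi.smul_apply, smul_eq_mul, map_mul, hc, mul_assoc,
    ← Finset.mul_sum, ← hp3]
  ring

theorem sum_smul_mem_paramSolSet {u : A} (hW0 : (0 : A) ∈ W)
    (hWadd : ∀ x ∈ W, ∀ y ∈ W, x + y ∈ W)
    (hWsmul : ∀ c : A, σ c = c → ∀ x ∈ W, c * x ∈ W) {ι : Type*} (s : Finset ι)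
    {d : ι → A} (hd : ∀ j, σ (d j) = d j) {v : ι → (Fin n → A) × A}
    (hv : ∀ j, v j ∈ paramSolSet σ W f u) :
    ∑ j ∈ s, d j • v j ∈ paramSolSet σ W f u :=
  Finset.sum_induction _ _ (fun _ _ => add_mem_paramSolSet hWadd) (zero_mem_paramSolSet hW0)
    fun j _ => smul_mem_paramSolSet hWsmul (hd j) (hv j)

theorem map_snd_eq_mul_of_mem_paramSolSet {u : A} {p : (Fin n → A) × A}
    (hp : p ∈ paramSolSet σ W f u) (hp1 : p.1 = 0) : σ p.2 = u * p.2 := by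
  simpa [hp1, sub_eq_zero] using hp.2.2

theorem exists_const_relation_of_mem_paramSolSet [Nontrivial A]
    (hfield : ∀ c : A, σ c = c → c ≠ 0 → IsUnit c) (G : Subgroup Aˣ)
    (hG : ∀ c : A, c ≠ 0 → (∃ u ∈ G, σ c = (u : A) * c) → IsUnit c)
    (hW0 : (0 : A) ∈ W) (hWadd : ∀ x ∈ W, ∀ y ∈ W, x + y ∈ W)
    (hWsmul : ∀ c : A, σ c = c → ∀ x ∈ W, c * x ∈ W) {u : Aˣ} (hu : u ∈ G)
    {ι : Type*} [Fintype ι] (hι : n + 2 ≤ Fintype.card ι)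
    {v : ι → (Fin n → A) × A} (hv : ∀ j, v j ∈ paramSolSet σ W f u) :
    ∃ d : ι → A, (∀ j, σ (d j) = d j) ∧ (∃ j, d j ≠ 0) ∧
      ∑ j, d j • v j = 0 := by
  let _ : Field (constSubring σ) := (isField_constSubring hfield).toField
  let C : ι → Fin n → constSubring σ := fun j i => ⟨(v j).1 i, (hv j).1 i⟩
  let ψ := Fintype.linearCombination (constSubring σ) C
  let comb : (ι → constSubring σ) → (Fin n → A) × A := fun x => ∑ j, (x j : A) • v j
  have comb_mem x : comb x ∈ paramSolSet σ W f u :=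
    sum_smul_mem_paramSolSet hW0 hWadd hWsmul _ (fun j => (x j).2) hv
  have comb_fst x (hx : x ∈ LinearMap.ker ψ) : (comb x).1 = 0 := by
    funext i
    have := congrArg Subtype.val (congrFun (LinearMap.mem_ker.mp hx) i)
    simpa [comb, ψ, C, Fintype.linearCombination_apply, Prod.fst_sum, Finset.sum_apply]
      using this
  have comb_sub_smul (c : constSubring σ) (x y) :
      comb (y - c • x) = comb y - (c : A) • comb x := by
    simp [comb, sub_smul, mul_smul, Finset.smul_sum]
  suffices ∃ x ∈ LinearMap.ker ψ, x ≠ 0 ∧ (comb x).2 = 0 by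
    obtain ⟨x, hx, hx0, hx2⟩ := this
    obtain ⟨j, hj⟩ := Function.ne_iff.mp hx0
    exact ⟨fun j => x j, fun j => (x j).2, ⟨j, by simpa using hj⟩,
      Prod.ext (comb_fst x hx) hx2⟩
  obtain ⟨⟨d, hd⟩, ⟨e, he⟩, hde⟩ :=
    ψ.exists_linearIndependent_pair_ker (by simpa using hι)
  have hd0 := hde.ne_zero 0
  by_cases hgd : (comb d).2 = 0
  · exact ⟨d, hd, by simpa using hd0, hgd⟩
  have hd_semiconst := map_snd_eq_mul_of_mem_paramSolSet (comb_mem d) (comb_fst d hd)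
  obtain ⟨w, hw⟩ := hG _ hgd ⟨u, hu, hd_semiconst⟩
  have he_semiconst := map_snd_eq_mul_of_mem_paramSolSet (comb_mem e) (comb_fst e he)
  let c : constSubring σ :=
    ⟨(comb e).2 * ↑w⁻¹, map_mul_inv_eq_of_map_eq_mul (by rwa [hw]) he_semiconst⟩
  refine ⟨e - c • d, sub_mem he (Submodule.smul_mem _ c hd), ?_, ?_⟩
  · refine sub_ne_zero.mpr fun h => (LinearIndependent.pair_iff' hd0).mp hde c ?_
    exact Subtype.ext h.symm
  · rw [comb_sub_smul]
    simp [c, ← hw, mul_assoc]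

end DifferenceRing

/-- Let `(A, σ)` be a difference ring whose constants form a field
`K`, and `G ≤ Aˣ` such that every nonzero semi-constant over `G` is a unit.  For a
`K`-submodule `W` of `A`, `f₁, …, fₙ ∈ A` and `u ∈ G`, the set
`V(u, (f₁,…,fₙ), W) = {(c₁,…,cₙ,g) ∈ Kⁿ × W : σ(g) − u·g = Σ cᵢfᵢ}` is a
`K`-submodule of `Kⁿ × W` of dimension at most `n + 1` over `K` (any `n + 2` of its
elements are `K`-linearly dependent). -/
theorem stmt_4 {A : Type*} [CommRing A] [CharZero A]
    (σ : A ≃+* A)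
    (hfield : ∀ c : A, σ c = c → c ≠ 0 → IsUnit c)
    (G : Subgroup Aˣ)
    (hG : ∀ c : A, c ≠ 0 → (∃ u ∈ G, σ c = (u : A) * c) → IsUnit c)
    (W : Set A) (hW0 : (0 : A) ∈ W)
    (hWadd : ∀ x ∈ W, ∀ y ∈ W, x + y ∈ W)
    (hWsmul : ∀ c : A, σ c = c → ∀ x ∈ W, c * x ∈ W)
    (n : ℕ) (f : Fin n → A) (u : Aˣ) (hu : u ∈ G) :
    ((0 : (Fin n → A) × A) ∈ paramSolSet σ W f (u : A))
    ∧ (∀ p ∈ paramSolSet σ W f (u : A), ∀ q ∈ paramSolSet σ W f (u : A),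
        p + q ∈ paramSolSet σ W f (u : A))
    ∧ (∀ c : A, σ c = c → ∀ p ∈ paramSolSet σ W f (u : A),
        ((fun i => c * p.1 i, c * p.2) : (Fin n → A) × A) ∈ paramSolSet σ W f (u : A))
    ∧ (∀ v : Fin (n + 2) → ((Fin n → A) × A),
        (∀ j, v j ∈ paramSolSet σ W f (u : A)) →
        ∃ d : Fin (n + 2) → A, (∀ j, σ (d j) = d j) ∧ (∃ j, d j ≠ 0) ∧
          (∀ i, ∑ j, d j * (v j).1 i = 0) ∧ ∑ j, d j * (v j).2 = 0) := by
  refine ⟨zero_mem_paramSolSet hW0, fun p hp q hq => add_mem_paramSolSet hWadd hp hq,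
    fun c hc p hp => smul_mem_paramSolSet hWsmul hc hp, fun v hv => ?_⟩
  obtain ⟨d, hd, hd0, hdv⟩ := exists_const_relation_of_mem_paramSolSet hfield G hG hW0 hWadd
    hWsmul hu (by simp) hv
  refine ⟨d, hd, hd0, fun i => ?_, ?_⟩
  · simpa [Prod.fst_sum, Finset.sum_apply] using congrFun (congrArg Prod.fst hdv) i
  · simpa [Prod.snd_sum] using congrArg Prod.snd hdv
end

section
/- Let (A, σ) be a difference ring and let G be a subgroup of the unit group Aˣ such that every nonzero element c ∈ A satisfying σ(c) = u·c for some u ∈ G is a unit of A. Let β ∈ A and let σ' be the ring automorphism of A[t] with σ'(a) = σ(a) for a ∈ A and σ'(t) = t + β. If there exist u ∈ G and g ∈ A[t] with deg(g) ≥ 1 such that deg(σ'(g) − u·g) < deg(g) − 1, then there exists γ ∈ A with σ(γ) − γ = β. -/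
/-!
Write `g = a tⁿ⁺¹ + b tⁿ + ⋯`. Since `σ'(g)` is the Taylor shift by `β` of `g` with `σ` applied
to its coefficients, the vanishing of the coefficients of `tⁿ⁺¹` and `tⁿ` in `σ'(g) − u·g` reads
`σ(a) = u·a` and `σ(b) + (n+1)·β·σ(a) = u·b`. So `a` and the constant `n + 1` are nonzero
semi-constants, hence units, and `γ = −b / ((n+1)·a)` solves `σ(γ) − γ = β`.
-/

open Polynomial

theorem Polynomial.coeff_taylor_of_natDegree_le_succ {R : Type*} [CommSemiring R] {f : R[X]}
    {n : ℕ} (hf : f.natDegree ≤ n + 1) (r : R) :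
    (taylor r f).coeff n = f.coeff n + (n + 1) * r * f.coeff (n + 1) := by
  have hdeg : (hasseDeriv n f).natDegree < 2 :=
    (natDegree_hasseDeriv_le f n).trans_lt (by omega)
  rw [taylor_coeff, eval_eq_sum_range' hdeg, Finset.sum_range_succ, Finset.sum_range_one,
    hasseDeriv_coeff, hasseDeriv_coeff]
  simp only [zero_add, Nat.choose_self, Nat.cast_one, one_mul, pow_zero, mul_one, add_comm 1 n,
    Nat.choose_succ_self_right, Nat.cast_add, pow_one]
  ring

theorem Polynomial.ringHom_eq_taylor_map {A : Type*} [CommSemiring A] (σ : A →+* A) (β : A)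
    (φ : A[X] →+* A[X]) (hC : ∀ a, φ (C a) = C (σ a)) (hX : φ X = X + C β) (p : A[X]) :
    φ p = taylor β (p.map σ) := by
  have : φ = (taylorAlgHom β : A[X] →+* A[X]).comp (mapRingHom σ) :=
    ringHom_ext (fun a => by simp [hC]) (by simp [hX])
  rw [this]; rfl

theorem exists_sub_eq_of_map_eq_mul {A : Type*} [CommRing A] (σ : A →+* A) {u b β : A} (e : Aˣ)
    (he : σ e = u * e) (hb : σ b + β * σ e = u * b) : ∃ γ : A, σ γ - γ = β := by
  refine ⟨-b * ↑e⁻¹, ?_⟩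
  have hσe : IsUnit (σ e) := e.isUnit.map σ
  refine hσe.mul_right_cancel ?_
  have : σ (↑e⁻¹ : A) * σ e = 1 := by rw [← map_mul, Units.inv_mul, map_one]
  calc (σ (-b * ↑e⁻¹) - -b * ↑e⁻¹) * σ e
      = -σ b * (σ (↑e⁻¹ : A) * σ e) + b * u * (↑e⁻¹ * e) := by rw [map_mul, map_neg, he]; ring
    _ = β * σ e := by rw [this, Units.inv_mul]; linear_combination -hb

/-- Let `(A, σ)` be a difference ring and `G ≤ Aˣ` with every
nonzero semi-constant over `G` a unit.  Let `σ'` on `A[t]` extend `σ` with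
`σ'(t) = t + β`.  If there are `u ∈ G` and `g ∈ A[t]` with `deg(g) ≥ 1` and
`deg(σ'(g) − u·g) < deg(g) − 1` (stated equivalently as
`deg(σ'(g) − u·g) + 1 < deg(g)`, since `⊥` absorbs addition), then there is
`γ ∈ A` with `σ(γ) − γ = β`. -/
theorem stmt_7 {A : Type*} [CommRing A] [CharZero A]
    (σ : A ≃+* A) (G : Subgroup Aˣ)
    (hG : ∀ c : A, c ≠ 0 → (∃ u ∈ G, σ c = (u : A) * c) → IsUnit c)
    (β : A)
    (σ' : Polynomial A ≃+* Polynomial A)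
    (hC : ∀ a : A, σ' (Polynomial.C a) = Polynomial.C (σ a))
    (hX : σ' Polynomial.X = Polynomial.X + Polynomial.C β)
    (u : Aˣ) (hu : u ∈ G) (g : Polynomial A) (hdeg : 1 ≤ g.degree)
    (hlt : (σ' g - Polynomial.C (u : A) * g).degree + 1 < g.degree) :
    ∃ γ : A, σ γ - γ = β := by
  have hg0 : g ≠ 0 := by rintro rfl; simp at hdeg
  obtain ⟨m, hm⟩ : ∃ m, g.natDegree = m + 1 := Nat.exists_eq_succ_of_ne_zero
    (natDegree_pos_iff_degree_pos.mpr (zero_lt_one.trans_le hdeg)).ne'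
  have hσ' : σ' g = taylor β (g.map (σ : A →+* A)) :=
    ringHom_eq_taylor_map (σ : A →+* A) β (σ' : A[X] →+* A[X]) hC hX g
  have hmap : (g.map (σ : A →+* A)).natDegree = m + 1 := by
    rw [natDegree_map_eq_of_injective σ.injective, hm]
  have hsmall : (σ' g - C (u : A) * g).degree < m := by
    rw [degree_eq_natDegree hg0, hm] at hlt
    exact (WithBot.add_lt_add_iff_right WithBot.one_ne_bot).mp (by exact_mod_cast hlt)
  set a := g.coeff (m + 1)
  set b := g.coeff m
  have htop : σ a = u * a := by
    have := coeff_eq_zero_of_degree_lt (hsmall.trans (by exact_mod_cast Nat.lt_add_one m))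
    rw [coeff_sub, coeff_C_mul, hσ', ← hmap, coeff_taylor_natDegree, leadingCoeff, hmap,
      coeff_map, sub_eq_zero] at this
    exact this
  have hnext : σ b + β * σ ((m + 1 : ℕ) * a) = u * b := by
    have := coeff_eq_zero_of_degree_lt hsmall
    rw [coeff_sub, coeff_C_mul, hσ', coeff_taylor_of_natDegree_le_succ hmap.le, coeff_map,
      coeff_map, sub_eq_zero] at this
    rw [map_mul, map_natCast, ← this]
    push_cast
    ring
  have ha0 : a ≠ 0 := by simpa [leadingCoeff, hm] using leadingCoeff_ne_zero.mpr hg0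
  have ha : IsUnit a := hG a ha0 ⟨u, hu, htop⟩
  have hm1 : IsUnit ((m + 1 : ℕ) : A) :=
    hG _ (Nat.cast_ne_zero.mpr m.succ_ne_zero) ⟨1, G.one_mem, by simp⟩
  exact exists_sub_eq_of_map_eq_mul (σ : A →+* A) (hm1.mul ha).unit
    (by rw [IsUnit.unit_spec, map_mul, map_natCast, RingEquiv.coe_toRingHom, htop]; ring) hnext
end

section
/- Let (A, σ) be a difference ring and let G be a subgroup of the unit group Aˣ such that every nonzero element c ∈ A satisfying σ(c) = u·c for some u ∈ G is a unit of A. Let β ∈ A and let σ' be the ring automorphism of A[t] with σ'(a) = σ(a) for a ∈ A and σ'(t) = t + β. Then the following are equivalent: (1) there exist g ∈ A[t]∖A (a nonconstant polynomial) and u ∈ G with σ'(g) = u·g; (2) there exists g ∈ A with σ(g) = g + β; (3) const(A[t], σ') strictly contains const(A, σ), i.e., there exists a nonconstant polynomial g ∈ A[t] with σ'(g) = g. -/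
/-!
The extension acts by `σ' p = taylor β (p.map σ)`. If `σ' p = u p` with `deg p = n + 1 ≥ 1`,
the top coefficient `c` of `p` satisfies `σ c = u c`, and the coefficient `a` of `tⁿ` satisfies
`σ a + (n + 1) σ(c) β = u a`. Both `c` and `n + 1` are nonzero semi-constants, hence units, so
`w = (n + 1) c` is a unit with `σ w = u w`, and `g = -a / w` solves `σ g = g + β`. Conversely,
such a `g` gives the nonconstant constant `t - g`.
-/

open Polynomial

namespace Polynomial

theorem apply_eq_taylor_map {A F : Type*} [CommSemiring A] [FunLike F A[X] A[X]]
    [RingHomClass F A[X] A[X]] {σ : A →+* A} {β : A} {f : F} (hC : ∀ a, f (C a) = C (σ a))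
    (hX : f X = X + C β) (p : A[X]) : f p = taylor β (p.map σ) := by
  have : (f : A[X] →+* A[X]) = eval₂RingHom (C.comp σ) (X + C β) :=
    ringHom_ext (by simpa using hC) (by simpa using hX)
  rw [← RingHom.coe_coe f, this, coe_eval₂RingHom, taylor_apply, comp, eval₂_map]

theorem coeff_taylor_of_natDegree_le_succ_s8 {R : Type*} [CommSemiring R] {f : R[X]} {n : ℕ}
    (hf : f.natDegree ≤ n + 1) (r : R) :
    (taylor r f).coeff n = f.coeff n + (n + 1) * f.coeff (n + 1) * r := by
  have hle : (hasseDeriv n f).natDegree ≤ 1 := (natDegree_hasseDeriv_le f n).trans (by omega)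
  rw [taylor_coeff, eq_X_add_C_of_natDegree_le_one hle]
  simp [hasseDeriv_coeff, add_comm 1 n]
  ring

theorem not_exists_eq_C_iff {R : Type*} [Semiring R] {p : R[X]} :
    (¬ ∃ a, p = C a) ↔ 0 < p.natDegree := by
  rw [Nat.pos_iff_ne_zero, Ne, natDegree_eq_zero]
  exact not_congr (exists_congr fun _ ↦ eq_comm)

end Polynomial

section TaylorMap

variable {A : Type*} [CommRing A] {σ : A ≃+* A} {β : A} {p : A[X]}

theorem apply_leadingCoeff_of_taylor_map_eq_C_mul {u : A}
    (hp : taylor β (p.map (σ : A →+* A)) = C u * p) :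
    σ p.leadingCoeff = u * p.leadingCoeff := by
  have hσ : Function.Injective (σ : A →+* A) := σ.injective
  have h := congrArg (coeff · (p.map (σ : A →+* A)).natDegree) hp
  rwa [coeff_taylor_natDegree, leadingCoeff_map_of_injective hσ, natDegree_map_eq_of_injective hσ,
    coeff_C_mul] at h

theorem apply_coeff_add_of_taylor_map_eq_C_mul {u : A} {n : ℕ} (hn : p.natDegree = n + 1)
    (hp : taylor β (p.map (σ : A →+* A)) = C u * p) :
    σ (p.coeff n) + (n + 1) * σ p.leadingCoeff * β = u * p.coeff n := by
  have hσ : Function.Injective (σ : A →+* A) := σ.injective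
  have h := congrArg (coeff · n) hp
  simp only [coeff_C_mul] at h
  rw [coeff_taylor_of_natDegree_le_succ_s8 (natDegree_map_eq_of_injective hσ p ▸ hn.le),
    coeff_map, coeff_map] at h
  rwa [leadingCoeff, hn]

theorem exists_apply_eq_add_of_taylor_map_eq_C_mul_of_isUnit {u : Aˣ} (hdeg : 0 < p.natDegree)
    (hp : taylor β (p.map (σ : A →+* A)) = C (u : A) * p) (hlc : IsUnit p.leadingCoeff)
    (hn : IsUnit (p.natDegree : A)) : ∃ g, σ g = g + β := by
  obtain ⟨n, hpn⟩ := Nat.exists_eq_add_one_of_ne_zero hdeg.ne'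
  have hlead := apply_leadingCoeff_of_taylor_map_eq_C_mul hp
  have hcoeff := apply_coeff_add_of_taylor_map_eq_C_mul hpn hp
  obtain ⟨w, hw⟩ := hn.mul hlc
  have hσw : Units.map (σ : A →* A) w = u * w := by
    ext
    rw [Units.coe_map, Units.val_mul, hw, MonoidHom.coe_coe, map_mul, map_natCast, hlead]
    ring
  have hσw_inv : σ ↑w⁻¹ = ↑w⁻¹ * ↑u⁻¹ := by
    rw [← MonoidHom.coe_coe, ← Units.coe_map_inv, hσw, mul_inv_rev, Units.val_mul]
  have hσa : σ (p.coeff n) = u * (p.coeff n - w * β) := by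
    rw [hpn, Nat.cast_succ] at hw
    linear_combination hcoeff - (n + 1) * β * hlead + u * β * hw
  refine ⟨-p.coeff n * ↑w⁻¹, ?_⟩
  rw [map_mul, map_neg, hσw_inv, hσa]
  linear_combination (-(p.coeff n - w * β) * ↑w⁻¹ : A) * u.mul_inv + β * w.mul_inv

theorem exists_apply_eq_add_of_taylor_map_eq_C_mul [CharZero A] {G : Subgroup Aˣ}
    (hG : ∀ c : A, c ≠ 0 → (∃ u ∈ G, σ c = (u : A) * c) → IsUnit c) {u : Aˣ} (hu : u ∈ G)
    (hdeg : 0 < p.natDegree) (hp : taylor β (p.map (σ : A →+* A)) = C (u : A) * p) :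
    ∃ g, σ g = g + β := by
  have hlc : IsUnit p.leadingCoeff :=
    hG _ (leadingCoeff_ne_zero.2 (ne_zero_of_natDegree_gt hdeg))
      ⟨u, hu, apply_leadingCoeff_of_taylor_map_eq_C_mul hp⟩
  have hn : IsUnit (p.natDegree : A) :=
    hG _ (Nat.cast_ne_zero.2 hdeg.ne') ⟨1, G.one_mem, by rw [map_natCast, Units.val_one, one_mul]⟩
  exact exists_apply_eq_add_of_taylor_map_eq_C_mul_of_isUnit hdeg hp hlc hn

end TaylorMap

/-- Let `(A, σ)` be a difference ring and `G ≤ Aˣ` with every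
nonzero semi-constant over `G` a unit, and `σ'` on `A[t]` extend `σ` with
`σ'(t) = t + β`.  TFAE: (1) some nonconstant `g ∈ A[t]` satisfies `σ'(g) = u·g`
for some `u ∈ G`; (2) some `g ∈ A` satisfies `σ(g) = g + β`; (3) some nonconstant
`g ∈ A[t]` satisfies `σ'(g) = g`. -/
theorem stmt_8 {A : Type*} [CommRing A] [CharZero A]
    (σ : A ≃+* A) (G : Subgroup Aˣ)
    (hG : ∀ c : A, c ≠ 0 → (∃ u ∈ G, σ c = (u : A) * c) → IsUnit c)
    (β : A)
    (σ' : Polynomial A ≃+* Polynomial A)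
    (hC : ∀ a : A, σ' (Polynomial.C a) = Polynomial.C (σ a))
    (hX : σ' Polynomial.X = Polynomial.X + Polynomial.C β) :
    ((∃ g : Polynomial A, (¬ ∃ a : A, g = Polynomial.C a) ∧
        ∃ u ∈ G, σ' g = Polynomial.C ((u : Aˣ) : A) * g)
      ↔ (∃ g : A, σ g = g + β))
    ∧ ((∃ g : A, σ g = g + β)
      ↔ (∃ g : Polynomial A, (¬ ∃ a : A, g = Polynomial.C a) ∧ σ' g = g)) := by
  have h12 : (∃ g : A[X], (¬ ∃ a, g = C a) ∧ ∃ u ∈ G, σ' g = C (u : A) * g) →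
      ∃ g, σ g = g + β := by
    rintro ⟨p, hp, u, hu, hpu⟩
    rw [not_exists_eq_C_iff] at hp
    rw [apply_eq_taylor_map (σ := (σ : A →+* A)) hC hX] at hpu
    exact exists_apply_eq_add_of_taylor_map_eq_C_mul hG hu hp hpu
  have h23 : (∃ g, σ g = g + β) → ∃ g : A[X], (¬ ∃ a, g = C a) ∧ σ' g = g := by
    rintro ⟨g, hg⟩
    refine ⟨X - C g, by rw [not_exists_eq_C_iff, natDegree_X_sub_C]; exact one_pos, ?_⟩
    rw [map_sub, hX, hC, hg, C_add]
    ring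
  have h31 : (∃ g : A[X], (¬ ∃ a, g = C a) ∧ σ' g = g) →
      ∃ g : A[X], (¬ ∃ a, g = C a) ∧ ∃ u ∈ G, σ' g = C (u : A) * g := by
    rintro ⟨g, hg, hfix⟩
    exact ⟨g, hg, 1, G.one_mem, by rw [hfix, Units.val_one, C_1, one_mul]⟩
  exact ⟨⟨h12, h31 ∘ h23⟩, h23, h12 ∘ h31⟩
end

section
/- Let F be a field, σ₀ a ring automorphism of F, β ∈ F, and let σ be the field automorphism of the rational function field F(t) with σ(a) = σ₀(a) for a ∈ F and σ(t) = t + β. Then const(F(t), σ) = const(F, σ₀) (every σ-invariant rational function lies in F and is σ₀-invariant) if and only if there exists no g ∈ F with σ₀(g) = g + β. -/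
/-!
On `F[X]` the automorphism `σ` acts by `p ↦ (σ₀ p)(X + β)`, which preserves coprimality and
monicity, so `σ r = r` forces this map to fix the reduced numerator and denominator of `r`.
Differentiation commutes with it, so in characteristic zero a fixed polynomial of degree `n ≥ 1`
has a fixed `(n - 1)`-st derivative `a X + b`, and `g = -b / a` satisfies `σ₀ g = g + β`.
Conversely such a `g` makes `X - g` a non-constant invariant.
-/

open Polynomial

namespace Polynomial

variable {F : Type*} [Field F]

noncomputable def mapShift (σ₀ : F ≃+* F) (β : F) : F[X] ≃+* F[X] :=
  (mapEquiv σ₀).trans (taylorEquiv β).toRingEquiv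

variable (σ₀ : F ≃+* F) (β : F)

@[simp]
lemma mapShift_apply (p : F[X]) : mapShift σ₀ β p = taylor β (p.map (σ₀ : F →+* F)) := rfl

lemma Monic.mapShift {p : F[X]} (hp : p.Monic) : (mapShift σ₀ β p).Monic := by
  rw [mapShift_apply, Monic, leadingCoeff_taylor]
  exact hp.map _

lemma derivative_mapShift (p : F[X]) :
    derivative (mapShift σ₀ β p) = mapShift σ₀ β (derivative p) := by
  simp [taylor_apply, derivative_comp, derivative_map]

lemma exists_eq_add_of_mapShift_eq_of_natDegree_eq_one {p : F[X]} (hfix : mapShift σ₀ β p = p)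
    (hp : p.natDegree = 1) : ∃ g : F, σ₀ g = g + β := by
  have ha : p.coeff 1 ≠ 0 := by
    have hp0 : p ≠ 0 := by rintro rfl; simp at hp
    simpa [leadingCoeff, hp] using leadingCoeff_ne_zero.2 hp0
  rw [eq_X_add_C_of_natDegree_le_one hp.le] at hfix
  have h1 : σ₀ (p.coeff 1) = p.coeff 1 := by
    simpa [taylor_apply] using congrArg (coeff · 1) hfix
  have h0 : σ₀ (p.coeff 1) * β + σ₀ (p.coeff 0) = p.coeff 0 := by
    simpa [taylor_apply] using congrArg (coeff · 0) hfix
  refine ⟨-p.coeff 0 / p.coeff 1, ?_⟩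
  have hb : σ₀ (p.coeff 0) = p.coeff 0 - p.coeff 1 * β := by
    linear_combination h0 - β * h1
  rw [map_div₀, map_neg, h1, hb]
  field_simp
  ring

lemma exists_eq_add_of_mapShift_eq [CharZero F] {p : F[X]} (hfix : mapShift σ₀ β p = p)
    (hp : p.natDegree ≠ 0) : ∃ g : F, σ₀ g = g + β := by
  obtain ⟨n, hn⟩ := Nat.exists_eq_add_one_of_ne_zero hp
  clear hp
  induction n generalizing p with
  | zero => exact exists_eq_add_of_mapShift_eq_of_natDegree_eq_one σ₀ β hfix hn
  | succ n ih =>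
    exact ih (p := derivative p) (by rw [← derivative_mapShift, hfix]) (by simp [hn])

end Polynomial

namespace RatFunc

variable {K : Type*} [Field K]

lemma denom_div_eq_of_isCoprime {p q : K[X]} (hpq : IsCoprime p q) (hq : q.Monic) :
    (algebraMap K[X] (RatFunc K) p / algebraMap K[X] (RatFunc K) q).denom = q := by
  set x := algebraMap K[X] (RatFunc K) p / algebraMap K[X] (RatFunc K) q
  have hx : x.num * q = p * x.denom := (num_mul_eq_mul_denom_iff hq.ne_zero).2 rfl
  have h1 : x.denom ∣ q :=
    x.isCoprime_num_denom.symm.dvd_of_dvd_mul_left ⟨p, by rw [hx, mul_comm]⟩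
  have h2 : q ∣ x.denom := hpq.symm.dvd_of_dvd_mul_left ⟨x.num, by rw [← hx, mul_comm]⟩
  exact eq_of_monic_of_associated x.monic_denom hq (associated_of_dvd_dvd h1 h2)

lemma num_div_eq_of_isCoprime {p q : K[X]} (hpq : IsCoprime p q) (hq : q.Monic) :
    (algebraMap K[X] (RatFunc K) p / algebraMap K[X] (RatFunc K) q).num = p := by
  set x := algebraMap K[X] (RatFunc K) p / algebraMap K[X] (RatFunc K) q
  have hx : x.num * q = p * x.denom := (num_mul_eq_mul_denom_iff hq.ne_zero).2 rfl
  rw [denom_div_eq_of_isCoprime hpq hq] at hx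
  exact mul_right_cancel₀ hq.ne_zero hx

end RatFunc

section ShiftAutomorphism

variable {F : Type*} [Field F] {σ₀ : F ≃+* F} {β : F} {σ : RatFunc F →+* RatFunc F}

lemma map_algebraMap_eq_mapShift (hC : ∀ a : F, σ (RatFunc.C a) = RatFunc.C (σ₀ a))
    (hX : σ RatFunc.X = RatFunc.X + RatFunc.C β) (p : F[X]) :
    σ (algebraMap F[X] (RatFunc F) p) = algebraMap F[X] (RatFunc F) (mapShift σ₀ β p) := by
  have : σ.comp (algebraMap F[X] (RatFunc F)) =
      (algebraMap F[X] (RatFunc F)).comp (mapShift σ₀ β) := by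
    ext
    · simp [RatFunc.algebraMap_C, hC]
    · simp [RatFunc.algebraMap_X, RatFunc.algebraMap_C, hX]
  exact RingHom.congr_fun this p

lemma num_denom_map_eq_mapShift (hC : ∀ a : F, σ (RatFunc.C a) = RatFunc.C (σ₀ a))
    (hX : σ RatFunc.X = RatFunc.X + RatFunc.C β) (x : RatFunc F) :
    (σ x).num = mapShift σ₀ β x.num ∧ (σ x).denom = mapShift σ₀ β x.denom := by
  have hσx : σ x = algebraMap F[X] (RatFunc F) (mapShift σ₀ β x.num) /
      algebraMap F[X] (RatFunc F) (mapShift σ₀ β x.denom) := by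
    rw [← map_algebraMap_eq_mapShift hC hX, ← map_algebraMap_eq_mapShift hC hX, ← map_div₀,
      x.num_div_denom]
  have hcop := x.isCoprime_num_denom.map (mapShift σ₀ β : F[X] →+* F[X])
  have hmonic := x.monic_denom.mapShift σ₀ β
  rw [hσx]
  exact ⟨RatFunc.num_div_eq_of_isCoprime hcop hmonic,
    RatFunc.denom_div_eq_of_isCoprime hcop hmonic⟩

end ShiftAutomorphism

/-- Let `F` be a field of characteristic zero, `σ₀` an automorphism
of `F`, `β ∈ F`, and `σ` the automorphism of `F(t)` extending `σ₀` with
`σ(t) = t + β`.  Then `const(F(t), σ) = const(F, σ₀)` iff there is no `g ∈ F` with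
`σ₀(g) = g + β`. -/
theorem stmt_9 {F : Type*} [Field F] [CharZero F]
    (σ₀ : F ≃+* F) (β : F)
    (σ : RatFunc F ≃+* RatFunc F)
    (hC : ∀ a : F, σ (RatFunc.C a) = RatFunc.C (σ₀ a))
    (hX : σ RatFunc.X = RatFunc.X + RatFunc.C β) :
    (∀ r : RatFunc F, σ r = r → ∃ c : F, σ₀ c = c ∧ r = RatFunc.C c)
      ↔ ¬ ∃ g : F, σ₀ g = g + β := by
  constructor
  · rintro hconst ⟨g, hg⟩
    obtain ⟨c, -, hc⟩ := hconst (RatFunc.X - RatFunc.C g) <| by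
      rw [map_sub, hC, hX, hg, map_add]; ring
    have hnum := congrArg RatFunc.num hc
    rw [← RatFunc.algebraMap_X, ← RatFunc.algebraMap_C, ← map_sub, RatFunc.num_algebraMap,
      RatFunc.num_C] at hnum
    simpa using congrArg natDegree hnum
  · intro hno r hr
    obtain ⟨hnum, hdenom⟩ := num_denom_map_eq_mapShift (σ := σ.toRingHom) hC hX r
    rw [RingEquiv.toRingHom_eq_coe, RingHom.coe_coe, hr] at hnum hdenom
    have hdeg {p : F[X]} (hp : mapShift σ₀ β p = p) : p.natDegree = 0 :=
      not_not.1 fun h => hno (exists_eq_add_of_mapShift_eq σ₀ β hp h)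
    have hdenom1 : r.denom = 1 := r.monic_denom.natDegree_eq_zero.1 (hdeg hdenom.symm)
    obtain ⟨c, hc⟩ : ∃ c, r.num = Polynomial.C c :=
      ⟨_, eq_C_of_natDegree_eq_zero (hdeg hnum.symm)⟩
    refine ⟨c, ?_, ?_⟩
    · simpa [hc] using hnum.symm
    · rw [← r.num_div_denom, hc, hdenom1, map_one, div_one, RatFunc.algebraMap_C]
end

section
/- Let (A, σ) be a difference ring and let G be a subgroup of the unit group Aˣ such that every nonzero element c ∈ A satisfying σ(c) = u·c for some u ∈ G is a unit of A. Let σ' be the ring automorphism of A[t] with σ'|_A = σ and σ'(t) = t + β for some β ∈ A, and assume this is a Σ-extension, i.e., const(A[t], σ') = const(A, σ). Then sconst_G(A[t], σ') = sconst_G(A, σ): every polynomial p ∈ A[t] with σ'(p) = u·p for some u ∈ G is a constant polynomial whose coefficient lies in sconst_G(A, σ). -/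
/-!
Since `σ'` acts as `p ↦ (σ p)(t + β)`, it preserves degrees and maps the leading coefficient
`a` of `p` to `σ a`. So if `σ' p = u p` then `σ a = u a`, and `a` is a unit by hypothesis.
Then `a⁻¹ p` is `σ'`-invariant, hence a constant `c` by the Σ-property, and `p = C (a c)`.
-/

open Polynomial

section

variable {A : Type*} [CommRing A] {σ : A ≃+* A} {β : A} {σ' : A[X] ≃+* A[X]}

theorem apply_eq_taylor_map (hC : ∀ a : A, σ' (C a) = C (σ a)) (hX : σ' X = X + C β)
    (q : A[X]) : σ' q = taylor β (q.map (σ : A →+* A)) := by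
  have hhom : (σ' : A[X] →+* A[X]) = (compRingHom (X + C β)).comp (mapRingHom σ) :=
    ringHom_ext (by simpa using hC) (by simpa using hX)
  rw [taylor_apply]
  exact DFunLike.congr_fun hhom q

theorem coeff_natDegree_apply (hC : ∀ a : A, σ' (C a) = C (σ a)) (hX : σ' X = X + C β)
    (p : A[X]) : (σ' p).coeff p.natDegree = σ p.leadingCoeff := by
  rw [apply_eq_taylor_map hC hX, ← natDegree_map_eq_of_injective (f := (σ : A →+* A)) σ.injective p,
    coeff_taylor_natDegree, leadingCoeff_map_of_injective σ.injective]
  rfl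

theorem apply_leadingCoeff_eq_mul (hC : ∀ a : A, σ' (C a) = C (σ a)) (hX : σ' X = X + C β)
    {p : A[X]} {u : A} (hp : σ' p = C u * p) : σ p.leadingCoeff = u * p.leadingCoeff := by
  rw [← coeff_natDegree_apply hC hX, hp, coeff_C_mul, leadingCoeff]

theorem apply_inv_mul_eq_inv {u : A} {w : Aˣ} (hw : σ w = u * w) :
    σ ↑w⁻¹ * u = ↑w⁻¹ :=
  Units.mul_eq_one_iff_eq_inv.mp <| by
    rw [mul_assoc, ← hw, ← map_mul, Units.inv_mul, map_one]

theorem apply_C_inv_mul_eq_self (hC : ∀ a : A, σ' (C a) = C (σ a)) {p : A[X]} {u : A}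
    {w : Aˣ} (hp : σ' p = C u * p) (hw : σ w = u * w) :
    σ' (C (↑w⁻¹ : A) * p) = C (↑w⁻¹ : A) * p := by
  rw [map_mul, hC, hp, ← mul_assoc, ← C_mul, apply_inv_mul_eq_inv hw]

end

theorem stmt_10_general {A : Type*} [CommRing A]
    (σ : A ≃+* A) (G : Subgroup Aˣ)
    (hG : ∀ c : A, c ≠ 0 → (∃ u ∈ G, σ c = (u : A) * c) → IsUnit c)
    (β : A)
    (σ' : Polynomial A ≃+* Polynomial A)
    (hC : ∀ a : A, σ' (Polynomial.C a) = Polynomial.C (σ a))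
    (hX : σ' Polynomial.X = Polynomial.X + Polynomial.C β)
    (hSigma : ∀ p : Polynomial A, σ' p = p → ∃ c : A, σ c = c ∧ p = Polynomial.C c) :
    ∀ p : Polynomial A, (∃ u ∈ G, σ' p = Polynomial.C (u : A) * p) →
      ∃ c : A, (∃ v ∈ G, σ c = (v : A) * c) ∧ p = Polynomial.C c := by
  rintro p ⟨u, hu, hp⟩
  obtain rfl | hp0 := eq_or_ne p 0
  · exact ⟨0, ⟨u, hu, by simp⟩, by simp⟩
  have hlead := apply_leadingCoeff_eq_mul hC hX hp
  obtain ⟨w, hw⟩ := hG _ (leadingCoeff_ne_zero.mpr hp0) ⟨u, hu, hlead⟩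
  rw [← hw] at hlead
  obtain ⟨c, hc, hpc⟩ := hSigma _ (apply_C_inv_mul_eq_self hC hp hlead)
  refine ⟨w * c, ⟨u, hu, by rw [map_mul, hc, hlead, mul_assoc]⟩, ?_⟩
  rw [C_mul, ← hpc, ← mul_assoc, ← C_mul, Units.mul_inv, C_1, one_mul]

/-- Let `(A, σ)` be a difference ring and `G ≤ Aˣ` with every
nonzero semi-constant over `G` a unit.  If `σ'` on `A[t]` extends `σ` with
`σ'(t) = t + β` and is a Σ-extension (`const(A[t], σ') = const(A, σ)`), then
`sconst_G(A[t], σ') = sconst_G(A, σ)`: every `p ∈ A[t]` with `σ'(p) = u·p` for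
some `u ∈ G` is a constant polynomial whose coefficient is a semi-constant over
`G`. -/
theorem stmt_10 {A : Type*} [CommRing A] [CharZero A]
    (σ : A ≃+* A) (G : Subgroup Aˣ)
    (hG : ∀ c : A, c ≠ 0 → (∃ u ∈ G, σ c = (u : A) * c) → IsUnit c)
    (β : A)
    (σ' : Polynomial A ≃+* Polynomial A)
    (hC : ∀ a : A, σ' (Polynomial.C a) = Polynomial.C (σ a))
    (hX : σ' Polynomial.X = Polynomial.X + Polynomial.C β)
    (hSigma : ∀ p : Polynomial A, σ' p = p → ∃ c : A, σ c = c ∧ p = Polynomial.C c) :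
    ∀ p : Polynomial A, (∃ u ∈ G, σ' p = Polynomial.C (u : A) * p) →
      ∃ c : A, (∃ v ∈ G, σ c = (v : A) * c) ∧ p = Polynomial.C c :=
  stmt_10_general σ G hG β σ' hC hX hSigma
end

section
/- Let (A, σ) be a difference ring with A reduced, and assume every nonzero element c ∈ A satisfying σ(c) = u·c for some unit u ∈ Aˣ is itself a unit of A. Let σ' be the ring automorphism of A[t] with σ'|_A = σ and σ'(t) = t + β for some β ∈ A, and assume const(A[t], σ') = const(A, σ) (a Σ-extension). Then the set of nonzero p ∈ A[t] satisfying σ'(p) = v·p for some unit v ∈ A[t]ˣ equals the set of constant polynomials with coefficient a unit of A; in particular gsconst(A[t], σ')∖{0} = gsconst(A, σ)∖{0} = Aˣ. -/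
/-!
Write `σ' p = taylor β (σ p)`: it preserves degree and applies `σ` to the leading coefficient.
Over a reduced ring the unit `v` is a constant `u ∈ Aˣ`, so the leading coefficient `c` of a
semi-invariant `p` satisfies `σ c = u c` and is therefore a unit. Then `c⁻¹ p` is a constant of
`σ'`, hence of degree `0` by the Σ-extension property, so `p = C c`.
-/

open Polynomial

namespace Polynomial

variable {R : Type*} [CommRing R]

theorem exists_eq_C_of_isUnit_of_isReduced [IsReduced R] {v : R[X]} (hv : IsUnit v) :
    ∃ u : Rˣ, v = C (u : R) := by
  have hdeg : v.natDegree = 0 := by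
    by_contra h
    exact not_isUnit_of_natDegree_pos_of_isReduced v (Nat.pos_of_ne_zero h) hv
  obtain ⟨u, hu⟩ := (isUnit_iff_coeff_isUnit_isNilpotent.mp hv).1
  exact ⟨u, by rw [hu, ← eq_C_of_natDegree_eq_zero hdeg]⟩

theorem ringHom_apply_eq_taylor_map (τ : R[X] →+* R[X]) (f : R →+* R) (b : R)
    (hC : ∀ a, τ (C a) = C (f a)) (hX : τ X = X + C b) (p : R[X]) :
    τ p = taylor b (p.map f) := by
  have : τ = eval₂RingHom (C.comp f) (X + C b) := ringHom_ext (by simpa using hC) (by simpa using hX)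
  rw [this, taylor_apply, comp, eval₂_map]
  rfl

variable {f : R →+* R}

theorem natDegree_taylor_map (hf : Function.Injective f) (b : R) (p : R[X]) :
    (taylor b (p.map f)).natDegree = p.natDegree := by
  rw [natDegree_taylor, natDegree_map_eq_of_injective hf]

theorem leadingCoeff_taylor_map (hf : Function.Injective f) (b : R) (p : R[X]) :
    (taylor b (p.map f)).leadingCoeff = f p.leadingCoeff := by
  rw [leadingCoeff_taylor, leadingCoeff_map_of_injective hf]

theorem apply_leadingCoeff_of_taylor_map_eq_C_mul (hf : Function.Injective f) {b u : R} {p : R[X]}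
    (h : taylor b (p.map f) = C u * p) : f p.leadingCoeff = u * p.leadingCoeff := by
  rw [← leadingCoeff_taylor_map hf b, leadingCoeff, natDegree_taylor_map hf, h, coeff_C_mul,
    leadingCoeff]

end Polynomial

theorem map_units_inv_mul_eq_of_map_eq_mul {M : Type*} [CommMonoid M] (f : M →* M) {c u : Mˣ}
    (h : f c = u * c) : f ↑c⁻¹ * u = ↑c⁻¹ :=
  calc f ↑c⁻¹ * u = f ↑c⁻¹ * (u * c) * ↑c⁻¹ := by rw [mul_assoc, mul_assoc, c.mul_inv, mul_one]
    _ = f (↑c⁻¹ * c) * ↑c⁻¹ := by rw [map_mul, h]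
    _ = ↑c⁻¹ := by rw [c.inv_mul, map_one, one_mul]

/-- Let `(A, σ)` be a difference ring with `A` reduced such that
every nonzero `c ∈ A` with `σ(c) = u·c` for some unit `u ∈ Aˣ` is a unit.  If `σ'`
on `A[t]` extends `σ` with `σ'(t) = t + β` and is a Σ-extension, then the nonzero
`p ∈ A[t]` with `σ'(p) = v·p` for some unit `v ∈ A[t]ˣ` are exactly the constant
polynomials with unit coefficient (`gsconst(A[t],σ')∖{0} = gsconst(A,σ)∖{0} = Aˣ`). -/
theorem stmt_11 {A : Type*} [CommRing A] [CharZero A]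
    (hred : IsReduced A)
    (σ : A ≃+* A)
    (hG : ∀ c : A, c ≠ 0 → (∃ u : Aˣ, σ c = (u : A) * c) → IsUnit c)
    (β : A)
    (σ' : Polynomial A ≃+* Polynomial A)
    (hC : ∀ a : A, σ' (Polynomial.C a) = Polynomial.C (σ a))
    (hX : σ' Polynomial.X = Polynomial.X + Polynomial.C β)
    (hSigma : ∀ p : Polynomial A, σ' p = p → ∃ c : A, σ c = c ∧ p = Polynomial.C c) :
    ∀ p : Polynomial A,
      (p ≠ 0 ∧ ∃ v : (Polynomial A)ˣ, σ' p = (v : Polynomial A) * p)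
        ↔ ∃ a : Aˣ, p = Polynomial.C (a : A) := by
  intro p
  constructor
  · rintro ⟨hp, v, hv⟩
    obtain ⟨u, hu⟩ := exists_eq_C_of_isUnit_of_isReduced v.isUnit
    have hlc : σ p.leadingCoeff = u * p.leadingCoeff :=
      apply_leadingCoeff_of_taylor_map_eq_C_mul σ.injective <| by
        rw [← ringHom_apply_eq_taylor_map σ'.toRingHom σ.toRingHom β hC hX, ← hu]
        exact hv
    obtain ⟨c, hc⟩ := hG _ (leadingCoeff_ne_zero.mpr hp) ⟨u, hlc⟩
    have hfix : σ' (C (↑c⁻¹ : A) * p) = C (↑c⁻¹ : A) * p := by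
      rw [← hc] at hlc
      rw [map_mul, hv, hu, hC, ← mul_assoc, ← C_mul]
      exact congrArg (C · * p) (map_units_inv_mul_eq_of_map_eq_mul σ.toMonoidHom hlc)
    obtain ⟨d, -, hd⟩ := hSigma _ hfix
    have hdeg : p.natDegree = 0 := by
      rw [← natDegree_C_mul_of_isUnit c⁻¹.isUnit, hd, natDegree_C]
    refine ⟨c, ?_⟩
    rw [hc, leadingCoeff, hdeg, ← eq_C_of_natDegree_eq_zero hdeg]
  · rintro ⟨a, rfl⟩
    obtain ⟨w, hw⟩ : IsUnit (C (σ a * ↑a⁻¹)) := isUnit_C.mpr ((a.isUnit.map σ).mul a⁻¹.isUnit)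
    refine ⟨by simp, w, ?_⟩
    rw [hC, hw, ← C_mul, mul_assoc, a.inv_mul, mul_one]
end

section
/- Let (A, σ) be a difference ring and let G be a subgroup of the unit group Aˣ such that every nonzero element c ∈ A satisfying σ(c) = u·c for some u ∈ G is a unit of A. Let E = A[y]/⟨y^λ − 1⟩ (λ > 1) be an R-extension of (A, σ) of order λ, with x the image of y, α = σ(x)/x ∈ G a primitive λ-th root of unity, and const(E, σ) = const(A, σ). Then sconst_G(E, σ) = {h·x^m : h ∈ sconst_G(A,σ), 0 ≤ m < λ}: an element p ∈ E satisfies σ(p) = u·p for some u ∈ G exactly when p = h·x^m with σ(h) = v·h for some v ∈ G and 0 ≤ m < λ; moreover every nonzero such p is a unit of E. -/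
/-!
Write `p = ∑ aᵢ xⁱ`. Since `σ x = α x`, the equation `σ p = u p` says `σ aᵢ = u α⁻ⁱ aᵢ` for every
`i`, so each nonzero coefficient is a semi-constant of `A`, hence a unit. If `aᵢ` and `aⱼ` with
`i < j` were both nonzero, `c = aᵢ / aⱼ` would satisfy `σ c = αʲ⁻ⁱ c`, and then `c x^(λ-(j-i))`
would be a constant of `E` outside `A`. So `p = aᵢ xⁱ` for a single `i`, and as `x` is a unit,
`p` is a unit as soon as it is nonzero.
-/

open Polynomial

section

variable {A E : Type*} [CommRing A] [CommRing E] [Algebra A E] {σ : A ≃+* A} {τ : E ≃+* E}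

/-- `sconst_G`; for `E = A` the factor `algebraMap A A u` is just `u`. -/
def IsSemiconst (G : Subgroup Aˣ) (τ : E ≃+* E) (p : E) : Prop :=
  ∃ u ∈ G, τ p = algebraMap A E u * p

def IsDifferenceExtension (σ : A ≃+* A) (τ : E ≃+* E) : Prop :=
  ∀ a, τ (algebraMap A E a) = algebraMap A E (σ a)

structure IsRExtension (σ : A ≃+* A) (τ : E ≃+* E) (pb : PowerBasis A E) (α : A) : Prop where
  isDifferenceExtension : IsDifferenceExtension σ τ
  map_gen : τ pb.gen = algebraMap A E α * pb.gen
  pow_dim : α ^ pb.dim = 1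
  exists_eq_algebraMap_of_map_eq : ∀ q : E, τ q = q → ∃ d : A, q = algebraMap A E d

theorem RingEquiv.map_mul_units_inv_eq {a : A} {v w : Aˣ} (b : Aˣ)
    (ha : σ a = v * a) (hb : σ b = w * b) :
    σ (a * ↑b⁻¹) = ↑(v * w⁻¹) * (a * ↑b⁻¹) := by
  have hb' : σ ↑b⁻¹ = ↑(w * b)⁻¹ :=
    Units.eq_inv_of_mul_eq_one_left (by rw [Units.val_mul, ← hb, ← map_mul, b.mul_inv, map_one])
  rw [map_mul, ha, hb', mul_inv, Units.val_mul, Units.val_mul]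
  ring

theorem IsDifferenceExtension.map_smul_pow (hτ : IsDifferenceExtension σ τ) {x : E} {α : A}
    (hx : τ x = algebraMap A E α * x) (c : A) (m : ℕ) :
    τ (c • x ^ m) = (σ c * α ^ m) • x ^ m := by
  rw [Algebra.smul_def, map_mul, hτ, map_pow, hx, mul_pow, ← map_pow, ← mul_assoc, ← map_mul,
    ← Algebra.smul_def]

theorem IsSemiconst.smul_pow {G : Subgroup Aˣ} (hτ : IsDifferenceExtension σ τ) {x : E} {α : Aˣ}
    (hx : τ x = algebraMap A E α * x) (hαG : α ∈ G) {h : A} (hh : IsSemiconst G σ h) (m : ℕ) :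
    IsSemiconst G τ (h • x ^ m) := by
  obtain ⟨v, hvG, hv⟩ := hh
  refine ⟨v * α ^ m, mul_mem hvG (pow_mem hαG m), ?_⟩
  rw [hτ.map_smul_pow hx, ← Algebra.smul_def, smul_smul, hv, Algebra.algebraMap_self,
    RingHom.id_apply]
  congr 1
  push_cast
  ring

variable (pb : PowerBasis A E)

theorem IsDifferenceExtension.repr_map (hτ : IsDifferenceExtension σ τ) {α : A}
    (hx : τ pb.gen = algebraMap A E α * pb.gen) (p : E) (i : Fin pb.dim) :
    pb.basis.repr (τ p) i = σ (pb.basis.repr p i) * α ^ (i : ℕ) := by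
  have h : τ p = ∑ j, (σ (pb.basis.repr p j) * α ^ (j : ℕ)) • pb.basis j := by
    conv_lhs => rw [← pb.basis.sum_repr p]
    simp only [map_sum, pb.coe_basis, hτ.map_smul_pow hx]
  rw [h, pb.basis.repr_sum_self]

theorem IsDifferenceExtension.map_repr_apply_of_map_eq_mul (hτ : IsDifferenceExtension σ τ)
    {α : Aˣ} (hx : τ pb.gen = algebraMap A E α * pb.gen) {p : E} {u : Aˣ}
    (hp : τ p = algebraMap A E u * p) (i : Fin pb.dim) :
    σ (pb.basis.repr p i) = ↑(u * (α ^ (i : ℕ))⁻¹) * pb.basis.repr p i := by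
  have h := hτ.repr_map pb hx p i
  rw [hp, ← Algebra.smul_def, map_smul, Finsupp.smul_apply, smul_eq_mul] at h
  rw [Units.val_mul, mul_right_comm, Units.eq_mul_inv_iff_mul_eq, Units.val_pow_eq_pow_val, h]

theorem PowerBasis.repr_smul_basis_apply (c : A) (i j : Fin pb.dim) :
    pb.basis.repr (c • pb.basis i) j = if i = j then c else 0 := by
  rw [map_smul, pb.basis.repr_self, Finsupp.smul_apply, Finsupp.single_apply]
  split_ifs <;> simp

variable {pb}

theorem IsRExtension.eq_zero_of_map_eq_pow_mul {α : A} (hR : IsRExtension σ τ pb α)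
    {c : A} {n : ℕ} (hn0 : 0 < n) (hn : n < pb.dim) (hc : σ c = α ^ n * c) : c = 0 := by
  set m := pb.dim - n
  -- `c x^(λ - n)` is constant, hence lies in `A`, but it is supported on a nonzero power of `x`.
  have hq : τ (c • pb.gen ^ m) = c • pb.gen ^ m := by
    rw [hR.isDifferenceExtension.map_smul_pow hR.map_gen, hc, mul_right_comm, ← pow_add,
      Nat.add_sub_cancel' hn.le, hR.pow_dim, one_mul]
  obtain ⟨d, hd⟩ := hR.exists_eq_algebraMap_of_map_eq _ hq
  have h := congrArg (fun q => pb.basis.repr q ⟨m, by omega⟩) hd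
  have e1 : pb.gen ^ m = pb.basis ⟨m, by omega⟩ := by simp
  have e0 : algebraMap A E d = d • pb.basis ⟨0, by omega⟩ := by simp [Algebra.algebraMap_eq_smul_one]
  rw [e1, e0, pb.repr_smul_basis_apply, pb.repr_smul_basis_apply] at h
  simpa [Fin.ext_iff, show 0 ≠ m by omega] using h

variable {G : Subgroup Aˣ} {α : Aˣ}

theorem IsRExtension.repr_eq_zero_of_lt (hR : IsRExtension σ τ pb α)
    (hG : ∀ c : A, c ≠ 0 → IsSemiconst G σ c → IsUnit c) (hαG : α ∈ G) {p : E} {u : Aˣ}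
    (hu : u ∈ G) (hp : τ p = algebraMap A E u * p) {i j : Fin pb.dim} (hij : i < j)
    (hj : pb.basis.repr p j ≠ 0) : pb.basis.repr p i = 0 := by
  have hcoeff := hR.isDifferenceExtension.map_repr_apply_of_map_eq_mul pb hR.map_gen hp
  have hfactor (k : Fin pb.dim) : u * (α ^ (k : ℕ))⁻¹ ∈ G :=
    mul_mem hu (inv_mem (pow_mem hαG _))
  obtain ⟨b, hb⟩ := hG _ hj ⟨_, hfactor j, hcoeff j⟩
  have hc := RingEquiv.map_mul_units_inv_eq b (hcoeff i) (hb ▸ hcoeff j)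
  have hratio : u * (α ^ (i : ℕ))⁻¹ * (u * (α ^ (j : ℕ))⁻¹)⁻¹ = α ^ ((j : ℕ) - i) := by
    rw [pow_sub α (Fin.le_def.mp hij.le), mul_inv, inv_inv, mul_mul_mul_comm, mul_inv_cancel,
      one_mul, mul_comm]
  rw [hratio, Units.val_pow_eq_pow_val] at hc
  have h0 := hR.eq_zero_of_map_eq_pow_mul (Nat.sub_pos_of_lt hij) (by omega) hc
  simpa using congrArg (· * (b : A)) h0

theorem IsRExtension.exists_eq_smul_gen_pow (hR : IsRExtension σ τ pb α)
    (hG : ∀ c : A, c ≠ 0 → IsSemiconst G σ c → IsUnit c) (hαG : α ∈ G) (hdim : 0 < pb.dim)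
    {p : E} {u : Aˣ} (hu : u ∈ G) (hp : τ p = algebraMap A E u * p) :
    ∃ i : Fin pb.dim, p = pb.basis.repr p i • pb.gen ^ (i : ℕ) := by
  obtain ⟨i, hi⟩ : ∃ i, ∀ j ≠ i, pb.basis.repr p j = 0 := by
    by_cases h : ∃ i, pb.basis.repr p i ≠ 0
    · obtain ⟨i, hi⟩ := h
      refine ⟨i, fun j hji => (lt_or_gt_of_ne hji).elim (fun hlt => ?_) fun hgt => ?_⟩
      · exact hR.repr_eq_zero_of_lt hG hαG hu hp hlt hi
      · by_contra hj
        exact hi (hR.repr_eq_zero_of_lt hG hαG hu hp hgt hj)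
    · push Not at h
      exact ⟨⟨0, hdim⟩, fun j _ => h j⟩
  refine ⟨i, ?_⟩
  conv_lhs => rw [← pb.basis.sum_repr p]
  rw [Finset.sum_eq_single i (fun j _ hj => by rw [hi j hj, zero_smul]) (by simp), pb.coe_basis]

theorem IsRExtension.isSemiconst_iff (hR : IsRExtension σ τ pb α)
    (hG : ∀ c : A, c ≠ 0 → IsSemiconst G σ c → IsUnit c) (hαG : α ∈ G) (hdim : 0 < pb.dim)
    (p : E) :
    IsSemiconst G τ p ↔ ∃ (h : A) (m : ℕ), m < pb.dim ∧ IsSemiconst G σ h ∧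
      p = algebraMap A E h * pb.gen ^ m := by
  constructor
  · rintro ⟨u, hu, hp⟩
    obtain ⟨i, hi⟩ := hR.exists_eq_smul_gen_pow hG hαG hdim hu hp
    refine ⟨pb.basis.repr p i, i, i.isLt,
      ⟨u * (α ^ (i : ℕ))⁻¹, mul_mem hu (inv_mem (pow_mem hαG _)), ?_⟩, ?_⟩
    · exact hR.isDifferenceExtension.map_repr_apply_of_map_eq_mul pb hR.map_gen hp i
    · rwa [← Algebra.smul_def]
  · rintro ⟨h, m, -, hh, rfl⟩
    rw [← Algebra.smul_def]
    exact hh.smul_pow hR.isDifferenceExtension hR.map_gen hαG m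

theorem IsRExtension.isUnit_of_isSemiconst (hR : IsRExtension σ τ pb α)
    (hG : ∀ c : A, c ≠ 0 → IsSemiconst G σ c → IsUnit c) (hαG : α ∈ G) (hdim : 0 < pb.dim)
    (hgen : IsUnit pb.gen) {p : E} (hp0 : p ≠ 0) (hp : IsSemiconst G τ p) : IsUnit p := by
  obtain ⟨h, m, -, hh, rfl⟩ := (hR.isSemiconst_iff hG hαG hdim p).mp hp
  have hh0 : h ≠ 0 := by
    rintro rfl
    simp at hp0
  exact ((hG h hh0 hh).map _).mul (hgen.pow m)

end

theorem stmt_15_general {A : Type*} [CommRing A] [CharZero A]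
    (σ : A ≃+* A) (G : Subgroup Aˣ)
    (hG : ∀ c : A, c ≠ 0 → (∃ u ∈ G, σ c = (u : A) * c) → IsUnit c)
    (lam : ℕ) (hlam : 1 < lam)
    (α : Aˣ) (hαG : α ∈ G) (hα : (α : A) ^ lam = 1)
    (I : Ideal (Polynomial A))
    (hI : I = Ideal.span {(Polynomial.X : Polynomial A) ^ lam - 1})
    (σ'' : (Polynomial A ⧸ I) ≃+* (Polynomial A ⧸ I))
    (hC : ∀ a : A, σ'' (Ideal.Quotient.mk I (Polynomial.C a))
        = Ideal.Quotient.mk I (Polynomial.C (σ a)))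
    (hX : σ'' (Ideal.Quotient.mk I Polynomial.X)
        = Ideal.Quotient.mk I (Polynomial.C (α : A)) * Ideal.Quotient.mk I Polynomial.X)
    (hconst : ∀ p : Polynomial A ⧸ I, σ'' p = p →
        ∃ c : A, σ c = c ∧ p = Ideal.Quotient.mk I (Polynomial.C c)) :
    ∀ p : Polynomial A ⧸ I,
      ((∃ u ∈ G, σ'' p = Ideal.Quotient.mk I (Polynomial.C ((u : Aˣ) : A)) * p)
        ↔ ∃ (h : A) (m : ℕ), m < lam ∧ (∃ v ∈ G, σ h = (v : A) * h) ∧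
            p = Ideal.Quotient.mk I (Polynomial.C h) * (Ideal.Quotient.mk I Polynomial.X) ^ m)
      ∧ (p ≠ 0 → (∃ u ∈ G, σ'' p = Ideal.Quotient.mk I (Polynomial.C ((u : Aˣ) : A)) * p)
          → IsUnit p) := by
  subst hI
  have hmonic : (X ^ lam - C 1 : A[X]).Monic := monic_X_pow_sub_C 1 (by omega)
  rw [map_one] at hmonic
  let pb := AdjoinRoot.powerBasis' hmonic
  have hdim : pb.dim = lam := by
    rw [AdjoinRoot.powerBasis'_dim]
    simpa using natDegree_X_pow_sub_C (n := lam) (r := (1 : A))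
  have hdim_pos : 0 < pb.dim := by omega
  have hR : IsRExtension σ σ'' pb α :=
    ⟨hC, hX, by rw [hdim]; exact hα, fun q hq => (hconst q hq).imp fun _ => And.right⟩
  have hgen : IsUnit pb.gen := by
    have h := AdjoinRoot.eval₂_root (X ^ lam - 1 : A[X])
    simp only [eval₂_sub, eval₂_X_pow, eval₂_one, sub_eq_zero] at h
    exact IsUnit.of_pow_eq_one h (by omega)
  intro p
  refine ⟨?_, hR.isUnit_of_isSemiconst hG hαG hdim_pos hgen⟩
  have h := hR.isSemiconst_iff hG hαG hdim_pos p
  rw [hdim] at h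
  exact h

/-- Let `(A, σ)` be a difference ring and `G ≤ Aˣ` with every
nonzero semi-constant over `G` a unit.  Let `E = A[y]/⟨y^λ − 1⟩` (`λ > 1`) be an
R-extension of `(A, σ)` of order `λ`: `x` the image of `y`, `σ(x) = α·x` with
`α ∈ G` a primitive `λ`-th root of unity, and `const(E, σ) = const(A, σ)`.  Then
`sconst_G(E, σ) = {h·x^m : h ∈ sconst_G(A,σ), 0 ≤ m < λ}`, and every nonzero
semi-constant over `G` in `E` is a unit. -/
theorem stmt_15 {A : Type*} [CommRing A] [CharZero A]
    (σ : A ≃+* A) (G : Subgroup Aˣ)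
    (hG : ∀ c : A, c ≠ 0 → (∃ u ∈ G, σ c = (u : A) * c) → IsUnit c)
    (lam : ℕ) (hlam : 1 < lam)
    (α : Aˣ) (hαG : α ∈ G) (hα : (α : A) ^ lam = 1)
    (hprim : ∀ n : ℕ, 0 < n → (α : A) ^ n = 1 → lam ≤ n)
    (I : Ideal (Polynomial A))
    (hI : I = Ideal.span {(Polynomial.X : Polynomial A) ^ lam - 1})
    (σ'' : (Polynomial A ⧸ I) ≃+* (Polynomial A ⧸ I))
    (hC : ∀ a : A, σ'' (Ideal.Quotient.mk I (Polynomial.C a))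
        = Ideal.Quotient.mk I (Polynomial.C (σ a)))
    (hX : σ'' (Ideal.Quotient.mk I Polynomial.X)
        = Ideal.Quotient.mk I (Polynomial.C (α : A)) * Ideal.Quotient.mk I Polynomial.X)
    (hconst : ∀ p : Polynomial A ⧸ I, σ'' p = p →
        ∃ c : A, σ c = c ∧ p = Ideal.Quotient.mk I (Polynomial.C c)) :
    ∀ p : Polynomial A ⧸ I,
      ((∃ u ∈ G, σ'' p = Ideal.Quotient.mk I (Polynomial.C ((u : Aˣ) : A)) * p)
        ↔ ∃ (h : A) (m : ℕ), m < lam ∧ (∃ v ∈ G, σ h = (v : A) * h) ∧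
            p = Ideal.Quotient.mk I (Polynomial.C h) * (Ideal.Quotient.mk I Polynomial.X) ^ m)
      ∧ (p ≠ 0 → (∃ u ∈ G, σ'' p = Ideal.Quotient.mk I (Polynomial.C ((u : Aˣ) : A)) * p)
          → IsUnit p) :=
  stmt_15_general σ G hG lam hlam α hαG hα I hI σ'' hC hX hconst
end
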